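/- arXiv:2511.22604 — 5 statements merged into one kernel-verified Lean document; each statement's English description precedes it below -/
import Mathlib

section
/- Let G = (G_t)_{t ∈ I} be an always-connected temporal graph over a finite interval I = {ℓ, …, r} on a vertex set V of size n, with average temporal maximum degree at most D (D ≥ 1 real), and let X ⊆ V be a set of at least two vertices. If |I| ≥ 2·D·n/|X| + 1, then there exist two distinct vertices u, v ∈ X such that there is a temporal walk from u to v in G. -/
/-- There is a temporal walk from `u` to `v` in the temporal graph `(G_t)` over the
interval `{l, …, r}`: a sequence `w_a, …, w_{b+1}` with `{a, …, b} ⊆ {l, …, r}`,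
`w_a = u`, `w_{b+1} = v`, where at each time step one stays put or moves along an edge
of the current snapshot. (The trivial walk `a = b + 1` is allowed.) -/
def TemporalReach {V : Type} (G : ℕ → SimpleGraph V) (l r : ℕ) (u v : V) : Prop :=
  ∃ (a b : ℕ) (w : ℕ → V), l ≤ a ∧ a ≤ b + 1 ∧ b ≤ r ∧
    w a = u ∧ w (b + 1) = v ∧
    ∀ t : ℕ, a ≤ t → t ≤ b → (w t = w (t + 1) ∨ (G t).Adj (w t) (w (t + 1)))

open Finset

lemma tg_walk_gain {V : Type} [Fintype V] [DecidableEq V]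
    (H : SimpleGraph V) (X : Finset V) (S S' : V → Finset V)
    (hsub : ∀ u, S u ⊆ S' u)
    (habs : ∀ u, ∀ x ∈ S u, ∀ y, H.Adj x y → y ∈ S' u)
    (hnr : ∀ u ∈ X, ∀ x ∈ X, x ∈ S' u → x = u)
    (u : V) (hu : u ∈ X) :
    ∀ {x y : V}, H.Walk x y → x ∈ S u →
      (X.filter (fun t => x ∈ S' t)).card ≤ 1 → y ∈ X → y ≠ u →
      ∃ v q, (min ((X.filter (fun t => v ∈ S t)).card) 2
              < min ((X.filter (fun t => v ∈ S' t)).card) 2)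
        ∧ H.Adj q v ∧ q ∈ S u ∧ (X.filter (fun t => q ∈ S' t)).card ≤ 1 := by
  intro x y W
  induction W with
  | nil =>
    intro hx _ hy hyu
    exact absurd (hnr u hu _ hy (hsub u hx)) hyu
  | @cons x b y h W ih =>
    intro hx hx1 hy hyu
    have hb' : b ∈ S' u := habs u x hx b h
    by_cases hg : min ((X.filter (fun t => b ∈ S t)).card) 2
        < min ((X.filter (fun t => b ∈ S' t)).card) 2
    · exact ⟨b, x, hg, h, hx, hx1⟩
    · push_neg at hg
      have hb'1 : 1 ≤ (X.filter (fun t => b ∈ S' t)).card :=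
        Finset.card_pos.mpr ⟨u, Finset.mem_filter.mpr ⟨hu, hb'⟩⟩
      have hminb : 1 ≤ min ((X.filter (fun t => b ∈ S t)).card) 2 := by
        have : 1 ≤ min ((X.filter (fun t => b ∈ S' t)).card) 2 := le_min hb'1 one_le_two
        omega
    -- so b ∈ S t for some t
      have hbS : 1 ≤ (X.filter (fun t => b ∈ S t)).card := by omega
      by_cases h2 : 2 ≤ (X.filter (fun t => b ∈ S t)).card
      · -- b in ≥ 2 sets: x adjacent to it gets a' x ≥ 2, contradiction
        obtain ⟨t₁, ht₁, t₂, ht₂, hne⟩ := Finset.one_lt_card.mp h2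
        have hxt : ∀ t ∈ X.filter (fun t => b ∈ S t), x ∈ S' t := by
          intro t ht
          exact habs t b (Finset.mem_filter.mp ht).2 x h.symm
        have : 1 < (X.filter (fun t => x ∈ S' t)).card := by
          apply Finset.one_lt_card.mpr
          refine ⟨t₁, ?_, t₂, ?_, hne⟩
          · exact Finset.mem_filter.mpr ⟨(Finset.mem_filter.mp ht₁).1, hxt _ ht₁⟩
          · exact Finset.mem_filter.mpr ⟨(Finset.mem_filter.mp ht₂).1, hxt _ ht₂⟩
        omega
      · -- b in exactly one S-set, which must be u's; recurse
        push_neg at h2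
        have hminb1 : min ((X.filter (fun t => b ∈ S t)).card) 2 = 1 := by omega
        have hb'le : (X.filter (fun t => b ∈ S' t)).card ≤ 1 := by
          have := hg; omega
        obtain ⟨t, ht⟩ := Finset.card_pos.mp hbS
        have htX := (Finset.mem_filter.mp ht).1
        have htS := (Finset.mem_filter.mp ht).2
        have htu : t = u := by
          apply Finset.card_le_one.mp hb'le
          · exact Finset.mem_filter.mpr ⟨htX, hsub t htS⟩
          · exact Finset.mem_filter.mpr ⟨hu, hb'⟩
        exact ih (htu ▸ htS) hb'le hy hyu

lemma tg_step {V : Type} [Fintype V] [DecidableEq V]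
    (H : SimpleGraph V) [DecidableRel H.Adj] (hpre : H.Preconnected)
    (X : Finset V) (hX : 2 ≤ X.card) (S S' : V → Finset V)
    (hmem : ∀ u ∈ X, u ∈ S u)
    (hsub : ∀ u, S u ⊆ S' u)
    (habs : ∀ u, ∀ x ∈ S u, ∀ y, H.Adj x y → y ∈ S' u)
    (hnr : ∀ u ∈ X, ∀ x ∈ X, x ∈ S' u → x = u)
    (w : V → ℕ) (hw : ∀ v, H.degree v ≤ w v) :
    X.card + ∑ v, w v * min ((X.filter (fun u => v ∈ S u)).card) 2
      ≤ ∑ v, w v * min ((X.filter (fun u => v ∈ S' u)).card) 2 := by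
  classical
  have hexc : ∀ u ∈ X, (X.filter (fun t => u ∈ S' t)).card ≤ 1 := by
    intro u hu
    apply Finset.card_le_one.mpr
    intro t₁ ht₁ t₂ ht₂
    have h₁ := Finset.mem_filter.mp ht₁
    have h₂ := Finset.mem_filter.mp ht₂
    rw [← hnr t₁ h₁.1 u hu h₁.2, ← hnr t₂ h₂.1 u hu h₂.2]
  have key : ∀ u : V, ∃ p : V × V, u ∈ X →
      (min ((X.filter (fun t => p.1 ∈ S t)).card) 2
        < min ((X.filter (fun t => p.1 ∈ S' t)).card) 2)
      ∧ H.Adj p.2 p.1 ∧ p.2 ∈ S u ∧ (X.filter (fun t => p.2 ∈ S' t)).card ≤ 1 := by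
    intro u
    by_cases hu : u ∈ X
    · have hne : (X.erase u).Nonempty := by
        apply Finset.card_pos.mp
        have := Finset.card_erase_of_mem hu
        omega
      obtain ⟨u', hu'⟩ := hne
      have hu'X : u' ∈ X := Finset.mem_of_mem_erase hu'
      have hu'ne : u' ≠ u := Finset.ne_of_mem_erase hu'
      obtain ⟨v, q, hgain, hadj, hqS, hq1⟩ :=
        tg_walk_gain H X S S' hsub habs hnr u hu ((hpre u u').some)
          (hmem u hu) (hexc u hu) hu'X hu'ne
      exact ⟨(v, q), fun _ => ⟨hgain, hadj, hqS, hq1⟩⟩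
    · exact ⟨(u, u), fun h => absurd h hu⟩
  choose f hf using key
  have hinj : ∀ u₁ ∈ X, ∀ u₂ ∈ X, (f u₁).2 = (f u₂).2 → u₁ = u₂ := by
    intro u₁ h₁ u₂ h₂ heq
    have c₁ := hf u₁ h₁
    have c₂ := hf u₂ h₂
    apply Finset.card_le_one.mp c₁.2.2.2
    · exact Finset.mem_filter.mpr ⟨h₁, hsub u₁ c₁.2.2.1⟩
    · exact Finset.mem_filter.mpr ⟨h₂, hsub u₂ (heq ▸ c₂.2.2.1)⟩
  have hcard : X.card = ∑ v, (X.filter (fun u => (f u).1 = v)).card :=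
    Finset.card_eq_sum_card_fiberwise (fun x _ => Finset.mem_univ _)
  rw [hcard, ← Finset.sum_add_distrib]
  apply Finset.sum_le_sum
  intro v _
  have hmono : (X.filter (fun u => v ∈ S u)).card ≤ (X.filter (fun u => v ∈ S' u)).card := by
    apply Finset.card_le_card
    intro t ht
    rcases Finset.mem_filter.mp ht with ⟨ht1, ht2⟩
    exact Finset.mem_filter.mpr ⟨ht1, hsub _ ht2⟩
  by_cases hfib : (X.filter (fun u => (f u).1 = v)).Nonempty
  · obtain ⟨u₀, hu₀⟩ := hfib
    have hu₀X := (Finset.mem_filter.mp hu₀).1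
    have hu₀v : (f u₀).1 = v := (Finset.mem_filter.mp hu₀).2
    have hgain := (hf u₀ hu₀X).1
    rw [hu₀v] at hgain
    have hfc : (X.filter (fun u => (f u).1 = v)).card ≤ w v := by
      have h1 : (X.filter (fun u => (f u).1 = v)).card ≤ (H.neighborFinset v).card := by
        apply Finset.card_le_card_of_injOn (fun u => (f u).2)
        · intro u hu
          have hm := Finset.mem_filter.mp hu
          have hc := hf u hm.1
          rw [Finset.mem_coe, SimpleGraph.mem_neighborFinset]
          have hadj := hc.2.1
          rw [hm.2] at hadj
          exact hadj.symm
        · intro u₁ h₁ u₂ h₂ heq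
          exact hinj u₁ (Finset.mem_filter.mp h₁).1 u₂ (Finset.mem_filter.mp h₂).1 heq
      exact h1.trans (hw v)
    have hstep : min ((X.filter (fun u => v ∈ S u)).card) 2 + 1
        ≤ min ((X.filter (fun u => v ∈ S' u)).card) 2 := hgain
    have h2 := Nat.mul_le_mul_left (w v) hstep
    rw [Nat.mul_add, Nat.mul_one] at h2
    omega
  · rw [Finset.not_nonempty_iff_eq_empty] at hfib
    rw [hfib]
    simp only [Finset.card_empty, zero_add]
    exact Nat.mul_le_mul_left _ (min_le_min_right _ hmono)

private def tgReach {V : Type} [Fintype V] [DecidableEq V] (G : ℕ → SimpleGraph V)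
    [∀ t, DecidableRel (G t).Adj] (l : ℕ) (u : V) : ℕ → Finset V
  | 0 => {u}
  | s+1 => tgReach G l u s ∪ (tgReach G l u s).biUnion (fun x => (G (l+s)).neighborFinset x)

section aux
variable {V : Type} [Fintype V] [DecidableEq V] {G : ℕ → SimpleGraph V}
  [∀ t, DecidableRel (G t).Adj] {l : ℕ}

private lemma tgReach_zero (u : V) : tgReach G l u 0 = {u} := rfl

private lemma tgReach_succ (u : V) (s : ℕ) :
    tgReach G l u (s+1)
      = tgReach G l u s ∪ (tgReach G l u s).biUnion (fun x => (G (l+s)).neighborFinset x) :=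
  rfl

private lemma tgReach_self (u : V) : ∀ s, u ∈ tgReach G l u s
  | 0 => by simp [tgReach_zero]
  | s+1 => by
      rw [tgReach_succ]
      exact Finset.mem_union_left _ (tgReach_self u s)

private lemma tgReach_subset (u : V) (s : ℕ) :
    tgReach G l u s ⊆ tgReach G l u (s+1) := by
  rw [tgReach_succ]
  exact Finset.subset_union_left

private lemma tgReach_absorb {u x y : V} {s : ℕ} (hx : x ∈ tgReach G l u s)
    (hadj : (G (l+s)).Adj x y) : y ∈ tgReach G l u (s+1) := by
  rw [tgReach_succ]
  apply Finset.mem_union_right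
  exact Finset.mem_biUnion.mpr ⟨x, hx, (SimpleGraph.mem_neighborFinset _ _ _).mpr hadj⟩

private lemma tgReach_walk {u : V} : ∀ (s : ℕ) (v : V), v ∈ tgReach G l u s →
    ∃ w : ℕ → V, w l = u ∧ w (l+s) = v ∧
      ∀ t, l ≤ t → t < l + s → (w t = w (t+1) ∨ (G t).Adj (w t) (w (t+1))) := by
  intro s
  induction s with
  | zero =>
    intro v hv
    rw [tgReach_zero, Finset.mem_singleton] at hv
    exact ⟨fun _ => u, rfl, hv ▸ rfl, fun t h1 h2 => by omega⟩
  | succ s ih =>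
    intro v hv
    rw [tgReach_succ, Finset.mem_union] at hv
    have main : ∀ x : V, x ∈ tgReach G l u s →
        (x = v ∨ (G (l+s)).Adj x v) →
        ∃ w : ℕ → V, w l = u ∧ w (l+(s+1)) = v ∧
          ∀ t, l ≤ t → t < l + (s+1) → (w t = w (t+1) ∨ (G t).Adj (w t) (w (t+1))) := by
      intro x hx hcase
      obtain ⟨w, hw1, hw2, hw3⟩ := ih x hx
      refine ⟨fun t => if t ≤ l + s then w t else v, ?_, ?_, ?_⟩
      · show (if l ≤ l + s then w l else v) = u
        rw [if_pos (by omega), hw1]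
      · show (if l + (s+1) ≤ l + s then w (l+(s+1)) else v) = v
        rw [if_neg (by omega)]
      · intro t h1 h2
        show (if t ≤ l + s then w t else v) = (if t+1 ≤ l+s then w (t+1) else v)
          ∨ (G t).Adj (if t ≤ l + s then w t else v) (if t+1 ≤ l+s then w (t+1) else v)
        by_cases ht : t < l + s
        · rw [if_pos (by omega : t ≤ l + s), if_pos (by omega : t + 1 ≤ l + s)]
          exact hw3 t h1 ht
        · have ht' : t = l + s := by omega
          rw [if_pos (by omega : t ≤ l + s), if_neg (by omega : ¬ (t + 1 ≤ l + s))]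
          subst ht'
          rw [hw2]
          rcases hcase with h | h
          · exact Or.inl h
          · exact Or.inr h
    rcases hv with hv | hv
    · exact main v hv (Or.inl rfl)
    · obtain ⟨x, hx, hxy⟩ := Finset.mem_biUnion.mp hv
      exact main x hx (Or.inr ((SimpleGraph.mem_neighborFinset _ _ _).mp hxy))

end aux

private lemma tg_chain {Phi : ℕ → ℕ} {k L : ℕ}
    (h : ∀ s, s < L → Phi s + k ≤ Phi (s+1)) :
    ∀ s, s ≤ L → Phi 0 + k * s ≤ Phi s := by
  intro s
  induction s with
  | zero => intro _; simp
  | succ s ih =>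
    intro hs
    calc Phi 0 + k * (s+1) = (Phi 0 + k * s) + k := by rw [Nat.mul_succ, Nat.add_assoc]
    _ ≤ Phi s + k := Nat.add_le_add_right (ih (by omega)) k
    _ ≤ Phi (s+1) := h s (by omega)

/-- In an always-connected temporal graph over the interval `I = {l,…,r}`
with average temporal maximum degree at most `D`, if `X` is a set of at least two
vertices and `|I| ≥ 2·D·n/|X| + 1`, then some two distinct vertices of `X` are joined by
a temporal walk. -/
theorem exists_temporal_walk_between_two_of_large_set
    {V : Type} [Fintype V] (G : ℕ → SimpleGraph V) (l r : ℕ) (D : ℝ) (hD : 1 ≤ D)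
    (hconn : ∀ t ∈ Finset.Icc l r, (G t).Connected)
    (hdeg : ((∑ v : V, (Finset.Icc l r).sup fun t => ((G t).neighborSet v).ncard : ℕ) : ℝ)
      ≤ D * Fintype.card V)
    (X : Finset V) (hX : 2 ≤ X.card)
    (hI : 2 * D * Fintype.card V / X.card + 1 ≤ ((Finset.Icc l r).card : ℝ)) :
    ∃ u ∈ X, ∃ v ∈ X, u ≠ v ∧ TemporalReach G l r u v := by
  classical
  by_contra hcon
  push_neg at hcon
  haveI : ∀ t, DecidableRel (G t).Adj := fun t => Classical.decRel _
  have hD0 : (0:ℝ) ≤ D := by linarith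
  have hk2 : 2 ≤ X.card := hX
  have hkpos : (0:ℝ) < (X.card : ℝ) := by
    have : 0 < X.card := by omega
    exact_mod_cast this
  have hn2 : 2 ≤ Fintype.card V := by
    refine le_trans hX ?_
    rw [← Finset.card_univ]
    exact Finset.card_le_univ X
  have hlr : l ≤ r := by
    by_contra hgt
    push_neg at hgt
    rw [Finset.Icc_eq_empty (by omega : ¬ l ≤ r)] at hI
    simp only [Finset.card_empty, Nat.cast_zero] at hI
    have hnn : (0:ℝ) ≤ 2 * D * (Fintype.card V : ℝ) / (X.card : ℝ) := by
      apply div_nonneg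
      · have : (0:ℝ) ≤ (Fintype.card V : ℝ) := Nat.cast_nonneg _
        nlinarith
      · exact le_of_lt hkpos
    linarith
  set L := (Finset.Icc l r).card with hLdef
  have hLval : L = r + 1 - l := Nat.card_Icc l r
  have hwdeg : ∀ t, t ∈ Finset.Icc l r → ∀ v, (G t).degree v
      ≤ (Finset.Icc l r).sup (fun t' => ((G t').neighborSet v).ncard) := by
    intro t ht v
    have h1 : ((G t).neighborSet v).ncard = (G t).degree v := by
      rw [Set.ncard_eq_toFinset_card', Set.toFinset_card]
      exact SimpleGraph.card_neighborSet_eq_degree _ _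
    rw [← h1]
    exact Finset.le_sup (f := fun t' => ((G t').neighborSet v).ncard) ht
  -- cones avoid the rest of X
  have hconeX : ∀ s, s ≤ L → ∀ u ∈ X, ∀ x ∈ X, x ∈ tgReach G l u s → x = u := by
    intro s hs u hu x hx hmr
    by_contra hxu
    rcases s with _ | s'
    · rw [tgReach_zero, Finset.mem_singleton] at hmr
      exact hxu hmr
    · obtain ⟨wk, hw1, hw2, hw3⟩ := tgReach_walk (s'+1) x hmr
      apply hcon u hu x hx (fun h => hxu h.symm)
      unfold TemporalReach
      refine ⟨l, l + s', wk, le_rfl, by omega, by omega, hw1, ?_, ?_⟩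
      · have he : l + s' + 1 = l + (s'+1) := by omega
        rw [he, hw2]
      · intro t h1 h2
        exact hw3 t h1 (by omega)
  -- every vertex has weight ≥ 1
  have hw1 : ∀ v : V, 1 ≤ (Finset.Icc l r).sup (fun t' => ((G t').neighborSet v).ncard) := by
    intro v
    obtain ⟨v', hv'⟩ := Fintype.exists_ne_of_one_lt_card (by omega) v
    have hpc := (hconn l (Finset.mem_Icc.mpr ⟨le_rfl, hlr⟩)).preconnected
    obtain ⟨p⟩ := hpc v v'
    have hadj : ∃ y, (G l).Adj v y := by
      cases p with
      | nil => exact absurd rfl hv'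
      | cons h _ => exact ⟨_, h⟩
    have hd : 0 < (G l).degree v := (SimpleGraph.degree_pos_iff_exists_adj _ _).mpr hadj
    have h2 := hwdeg l (Finset.mem_Icc.mpr ⟨le_rfl, hlr⟩) v
    omega
  -- the potential increases by at least |X| each step
  have hstep : ∀ s, s < L →
      (∑ v, ((Finset.Icc l r).sup fun t => ((G t).neighborSet v).ncard)
         * min ((X.filter (fun u => v ∈ tgReach G l u s)).card) 2) + X.card
      ≤ ∑ v, ((Finset.Icc l r).sup fun t => ((G t).neighborSet v).ncard)
         * min ((X.filter (fun u => v ∈ tgReach G l u (s+1))).card) 2 := by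
    intro s hs
    have hmemIcc : l + s ∈ Finset.Icc l r := Finset.mem_Icc.mpr ⟨by omega, by omega⟩
    have h := tg_step (G (l+s)) (hconn (l+s) hmemIcc).preconnected X hX
      (fun u => tgReach G l u s) (fun u => tgReach G l u (s+1))
      (fun u _ => tgReach_self u s) (fun u => tgReach_subset u s)
      (fun u x hx y hadj => tgReach_absorb hx hadj)
      (fun u hu x hx hmem => hconeX (s+1) (by omega) u hu x hx hmem)
      (fun v => (Finset.Icc l r).sup fun t => ((G t).neighborSet v).ncard)
      (fun v => hwdeg (l+s) hmemIcc v)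
    rwa [Nat.add_comm] at h
  have hchain := tg_chain hstep L le_rfl
  -- initial potential at least |X|
  have hPhi0 : X.card ≤ ∑ v, ((Finset.Icc l r).sup fun t => ((G t).neighborSet v).ncard)
      * min ((X.filter (fun u => v ∈ tgReach G l u 0)).card) 2 := by
    have h1 : ∀ v ∈ X, 1 ≤ ((Finset.Icc l r).sup fun t => ((G t).neighborSet v).ncard)
        * min ((X.filter (fun u => v ∈ tgReach G l u 0)).card) 2 := by
      intro v hv
      have hm : v ∈ X.filter (fun u => v ∈ tgReach G l u 0) :=
        Finset.mem_filter.mpr ⟨hv, by rw [tgReach_zero]; exact Finset.mem_singleton_self v⟩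
      have hc : 0 < (X.filter (fun u => v ∈ tgReach G l u 0)).card :=
        Finset.card_pos.mpr ⟨v, hm⟩
      have hmin : 1 ≤ min ((X.filter (fun u => v ∈ tgReach G l u 0)).card) 2 :=
        le_min hc one_le_two
      simpa using Nat.mul_le_mul (hw1 v) hmin
    calc X.card = ∑ _v ∈ X, 1 := by simp
    _ ≤ ∑ v ∈ X, ((Finset.Icc l r).sup fun t => ((G t).neighborSet v).ncard)
        * min ((X.filter (fun u => v ∈ tgReach G l u 0)).card) 2 := Finset.sum_le_sum h1
    _ ≤ _ := Finset.sum_le_sum_of_subset (Finset.subset_univ X)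
  -- final potential at most twice the total weight
  have hPhiL : (∑ v, ((Finset.Icc l r).sup fun t => ((G t).neighborSet v).ncard)
      * min ((X.filter (fun u => v ∈ tgReach G l u L)).card) 2)
      ≤ 2 * ∑ v, (Finset.Icc l r).sup fun t => ((G t).neighborSet v).ncard := by
    rw [Finset.mul_sum]
    apply Finset.sum_le_sum
    intro v _
    calc ((Finset.Icc l r).sup fun t => ((G t).neighborSet v).ncard)
        * min ((X.filter (fun u => v ∈ tgReach G l u L)).card) 2
        ≤ ((Finset.Icc l r).sup fun t => ((G t).neighborSet v).ncard) * 2 :=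
          Nat.mul_le_mul_left _ (min_le_right _ _)
    _ = 2 * ((Finset.Icc l r).sup fun t => ((G t).neighborSet v).ncard) := Nat.mul_comm _ _
  have hnat : X.card + X.card * L
      ≤ 2 * ∑ v, (Finset.Icc l r).sup fun t => ((G t).neighborSet v).ncard := by
    calc X.card + X.card * L
        ≤ (∑ v, ((Finset.Icc l r).sup fun t => ((G t).neighborSet v).ncard)
          * min ((X.filter (fun u => v ∈ tgReach G l u 0)).card) 2) + X.card * L :=
          Nat.add_le_add_right hPhi0 _
    _ ≤ _ := hchain
    _ ≤ _ := hPhiL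
  have hcast : (X.card:ℝ) + (X.card:ℝ) * (L:ℝ)
      ≤ 2 * ((∑ v, (Finset.Icc l r).sup fun t => ((G t).neighborSet v).ncard : ℕ):ℝ) := by
    exact_mod_cast hnat
  have hsum : ((∑ v, (Finset.Icc l r).sup fun t => ((G t).neighborSet v).ncard : ℕ):ℝ)
      ≤ D * (Fintype.card V : ℝ) := hdeg
  have hL2 : 2 * D * (Fintype.card V : ℝ) / (X.card:ℝ) + 1 ≤ (L:ℝ) := hI
  have h2 : 2 * D * (Fintype.card V : ℝ) ≤ ((L:ℝ) - 1) * (X.card:ℝ) := by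
    have h0 : 2 * D * (Fintype.card V : ℝ) / (X.card:ℝ) ≤ (L:ℝ) - 1 := by linarith
    have h3 := mul_le_mul_of_nonneg_right h0 (le_of_lt hkpos)
    rwa [div_mul_cancel₀ _ (ne_of_gt hkpos)] at h3
  have hk2R : (2:ℝ) ≤ (X.card:ℝ) := by exact_mod_cast hk2
  nlinarith [hcast, hsum, h2, hk2R]
end

section
/- Let G = (G_t)_{t ∈ I} be an always-connected temporal graph over a finite interval I = {ℓ, …, r} on a vertex set V of size n, with average temporal maximum degree at most D (D ≥ 1 real), and let k ≥ 2 be an integer. If |I| ≥ 2·D·n/k + 1, then every set X ⊆ V of vertices such that for all distinct u, v ∈ X there is no temporal walk from u to v in G satisfies |X| < k. -/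
section TemporalWalkAux

variable {V : Type}


/-- There is a temporal walk starting at `u` at time `a` and ending at `v` at time `b`,
using steps `a, a+1, …, b-1`. -/
def TGWFlow (G : ℕ → SimpleGraph V) (a b : ℕ) (u v : V) : Prop :=
  ∃ w : ℕ → V, w a = u ∧ w b = v ∧
    ∀ t : ℕ, a ≤ t → t < b → (w t = w (t + 1) ∨ (G t).Adj (w t) (w (t + 1)))

theorem tgw_flow_const (G : ℕ → SimpleGraph V) (a b : ℕ) (u : V) : TGWFlow G a b u u :=
  ⟨fun _ => u, rfl, rfl, fun _ _ _ => Or.inl rfl⟩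

theorem tgw_flow_trans {G : ℕ → SimpleGraph V} {a b c : ℕ} {u v x : V}
    (hab : a ≤ b) (hbc : b ≤ c) (h1 : TGWFlow G a b u v) (h2 : TGWFlow G b c v x) :
    TGWFlow G a c u x := by
  obtain ⟨w1, hw1a, hw1b, hs1⟩ := h1
  obtain ⟨w2, hw2b, hw2c, hs2⟩ := h2
  refine ⟨fun t => if t < b then w1 t else w2 t, ?_, ?_, ?_⟩
  · by_cases h : a < b
    · simp [h, hw1a]
    · have hab' : a = b := by omega
      subst hab'
      simp only [lt_irrefl, if_neg (lt_irrefl a)]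
      rw [hw2b, ← hw1b]
      exact hw1a
  · have h : ¬ c < b := by omega
    simp only [if_neg h]
    exact hw2c
  · intro t hat htc
    by_cases h1lt : t + 1 < b
    · have ht : t < b := by omega
      simp only [if_pos ht, if_pos h1lt]
      exact hs1 t hat ht
    · by_cases ht : t < b
      · have htb : t + 1 = b := by omega
        simp only [if_pos ht, if_neg h1lt]
        have hrw : w2 (t + 1) = w1 (t + 1) := by rw [htb, hw2b, hw1b]
        rw [hrw]
        exact hs1 t hat ht
      · simp only [if_neg ht, if_neg h1lt]
        exact hs2 t (by omega) htc

theorem tgw_flow_stay_right {G : ℕ → SimpleGraph V} {a b c : ℕ} {u v : V}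
    (h : TGWFlow G a b u v) (hab : a ≤ b) (hbc : b ≤ c) : TGWFlow G a c u v :=
  tgw_flow_trans hab hbc h (tgw_flow_const G b c v)

theorem tgw_flow_stay_left {G : ℕ → SimpleGraph V} {a b c : ℕ} {u v : V}
    (hab : a ≤ b) (hbc : b ≤ c) (h : TGWFlow G b c u v) : TGWFlow G a c u v :=
  tgw_flow_trans hab hbc (tgw_flow_const G a b u) h

theorem tgw_flow_single {G : ℕ → SimpleGraph V} {t : ℕ} {u v : V} (h : (G t).Adj u v) :
    TGWFlow G t (t + 1) u v := by
  refine ⟨fun s => if s ≤ t then u else v, by simp, by simp, ?_⟩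
  intro s hts hst
  have hs : s = t := by omega
  subst hs
  simp only [if_pos le_rfl, if_neg (by omega : ¬ s + 1 ≤ s)]
  exact Or.inr h

theorem tgw_flow_step {G : ℕ → SimpleGraph V} {a t : ℕ} {u v x : V}
    (h : TGWFlow G a t u v) (hadj : (G t).Adj v x) (hat : a ≤ t) : TGWFlow G a (t + 1) u x :=
  tgw_flow_trans hat (Nat.le_succ t) h (tgw_flow_single hadj)

theorem tgw_flow_step_front {G : ℕ → SimpleGraph V} {t c : ℕ} {x v y : V}
    (hadj : (G t).Adj x v) (h : TGWFlow G (t + 1) c v y) (hc : t + 1 ≤ c) : TGWFlow G t c x y :=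
  tgw_flow_trans (Nat.le_succ t) hc (tgw_flow_single hadj) h

/-- The two-way core of source `u` at time `t`. -/
def TGWCore (G : ℕ → SimpleGraph V) (l r : ℕ) (u : V) (t : ℕ) (b : V) : Prop :=
  TGWFlow G l t u b ∧ TGWFlow G (t + 1) (r + 1) b u

theorem tgw_exists_boundary {Gr : SimpleGraph V} (S : Set V) :
    ∀ {x y : V}, Gr.Walk x y → x ∈ S → y ∉ S →
      ∃ b ∈ S, ∃ z, z ∉ S ∧ Gr.Adj b z := by
  intro x y p
  induction p with
  | nil => intro hx hy; exact absurd hx hy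
  | @cons a b c h p ih =>
      intro hx hy
      by_cases hmem : b ∈ S
      · exact ih hmem hy
      · exact ⟨a, hx, b, hmem, h⟩

end TemporalWalkAux

/-- In an always-connected temporal graph over the interval `I = {l,…,r}`
with average temporal maximum degree at most `D`, if `k ≥ 2` is an integer with
`|I| ≥ 2·D·n/k + 1`, then every set `X` of vertices no two distinct members of which are
joined by a temporal walk satisfies `|X| < k`. -/
theorem card_lt_of_no_temporal_walks
    {V : Type} [Fintype V] (G : ℕ → SimpleGraph V) (l r : ℕ) (D : ℝ) (hD : 1 ≤ D)
    (k : ℕ) (hk : 2 ≤ k)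
    (hconn : ∀ t ∈ Finset.Icc l r, (G t).Connected)
    (hdeg : ((∑ v : V, (Finset.Icc l r).sup fun t => ((G t).neighborSet v).ncard : ℕ) : ℝ)
      ≤ D * Fintype.card V)
    (hI : 2 * D * Fintype.card V / k + 1 ≤ ((Finset.Icc l r).card : ℝ))
    (X : Finset V)
    (hX : ∀ u ∈ X, ∀ v ∈ X, u ≠ v → ¬ TemporalReach G l r u v) :
    X.card < k := by
  classical
  by_contra hk'
  push_neg at hk'
  have hD0 : (0:ℝ) ≤ D := le_trans zero_le_one hD
  have hn0 : (0:ℝ) ≤ (Fintype.card V : ℝ) := by positivity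
  have hk0 : (0:ℝ) < (k:ℝ) := by exact_mod_cast (by omega : 0 < k)
  have hlr : l ≤ r := by
    by_contra hlr'
    have hemp : Finset.Icc l r = ∅ := Finset.Icc_eq_empty (by omega)
    rw [hemp] at hI
    simp only [Finset.card_empty, Nat.cast_zero] at hI
    have h0 : (0:ℝ) ≤ 2 * D * (Fintype.card V : ℝ) / (k:ℝ) := by positivity
    linarith
  have hX2 : 1 < X.card := by omega
  -- from a full-interval flow to TemporalReach
  have hflow_reach : ∀ u v : V, TGWFlow G l (r + 1) u v → TemporalReach G l r u v := by
    rintro u v ⟨wf, h1, h2, h3⟩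
    exact ⟨l, r, wf, le_rfl, by omega, le_rfl, h1, h2, fun t ht1 ht2 => h3 t ht1 (by omega)⟩
  have hXflow : ∀ u ∈ X, ∀ v ∈ X, u ≠ v → ¬ TGWFlow G l (r + 1) u v :=
    fun u hu v hv hne hf => hX u hu v hv hne (hflow_reach u v hf)
  -- choice of a boundary edge of the core, for every (source, time) pair
  have key : ∀ p : V × ℕ, ∃ q : V × V, p.1 ∈ X → p.2 ∈ Finset.Icc l r →
      TGWCore G l r p.1 p.2 q.1 ∧ ¬ TGWCore G l r p.1 p.2 q.2 ∧ (G p.2).Adj q.1 q.2 := by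
    rintro ⟨u, t⟩
    by_cases hmem : u ∈ X ∧ t ∈ Finset.Icc l r
    · obtain ⟨hu, htI⟩ := hmem
      have ht := Finset.mem_Icc.mp htI
      obtain ⟨v, hv, hvu⟩ := Finset.exists_mem_ne hX2 u
      have hucore : TGWCore G l r u t u :=
        ⟨tgw_flow_const G l t u, tgw_flow_const G (t + 1) (r + 1) u⟩
      have hvcore : ¬ TGWCore G l r u t v := by
        rintro ⟨hf, -⟩
        exact hXflow u hu v hv (Ne.symm hvu) (tgw_flow_stay_right hf ht.1 (by omega))
      obtain ⟨p⟩ := (hconn t htI).preconnected u v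
      obtain ⟨b, hb, z, hz, hadj⟩ :=
        tgw_exists_boundary {c | TGWCore G l r u t c} p hucore hvcore
      exact ⟨(b, z), fun _ _ => ⟨hb, hz, hadj⟩⟩
    · exact ⟨(u, u), fun h1 h2 => absurd ⟨h1, h2⟩ hmem⟩
  choose f hf using key
  have hcount : (X ×ˢ Finset.Icc l r).card =
      ∑ z : V, ((X ×ˢ Finset.Icc l r).filter fun p => (f p).2 = z).card :=
    Finset.card_eq_sum_card_fiberwise (fun p _ => Finset.mem_univ _)
  have hfiber : ∀ z : V, ((X ×ˢ Finset.Icc l r).filter fun p => (f p).2 = z).card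
      ≤ 2 * (Finset.Icc l r).sup fun t => ((G t).neighborSet z).ncard := by
    intro z
    set Q := (X ×ˢ Finset.Icc l r).filter fun p => (f p).2 = z with hQdef
    have hQfacts : ∀ p ∈ Q, p.1 ∈ X ∧ l ≤ p.2 ∧ p.2 ≤ r ∧
        TGWFlow G l (p.2 + 1) p.1 z ∧ TGWFlow G p.2 (r + 1) z p.1 ∧
        ¬ TGWCore G l r p.1 p.2 z ∧ (G p.2).Adj (f p).1 z ∧ TGWCore G l r p.1 p.2 (f p).1 := by
      intro p hp
      rw [hQdef, Finset.mem_filter, Finset.mem_product] at hp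
      obtain ⟨⟨hu, ht⟩, hz⟩ := hp
      have hI' := Finset.mem_Icc.mp ht
      have hdata := hf p hu ht
      rw [hz] at hdata
      obtain ⟨hcore, hncore, hadj⟩ := hdata
      refine ⟨hu, hI'.1, hI'.2, ?_, ?_, hncore, hadj, hcore⟩
      · exact tgw_flow_step hcore.1 hadj hI'.1
      · exact tgw_flow_step_front hadj.symm hcore.2 (by omega)
    have hAB : ∀ p ∈ Q, ∀ q ∈ Q, p.1 ≠ q.1 → p.2 < q.2 → False := by
      intro p hp q hq hne hlt
      obtain ⟨hup, hlp, hrp, hP1p, -, -, -, -⟩ := hQfacts p hp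
      obtain ⟨huq, hlq, hrq, -, hP2q, -, -, -⟩ := hQfacts q hq
      have h1 : TGWFlow G l q.2 p.1 z := tgw_flow_stay_right hP1p (by omega) (by omega)
      exact hXflow p.1 hup q.1 huq hne (tgw_flow_trans (by omega) (by omega) h1 hP2q)
    have hA : ∀ p ∈ Q, ∀ q ∈ Q, p.1 ≠ q.1 → p.2 = q.2 := by
      intro p hp q hq hne
      rcases lt_trichotomy p.2 q.2 with h | h | h
      · exact (hAB p hp q hq hne h).elim
      · exact h
      · exact (hAB q hq p hp (Ne.symm hne) h).elim
    have hC : ∀ p ∈ Q, ∀ q ∈ Q, p.2 = q.2 → p.1 ≠ q.1 → (f p).1 ≠ (f q).1 := by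
      intro p hp q hq hteq hne heq
      obtain ⟨hup, hlp, hrp, -, -, -, -, hcorep⟩ := hQfacts p hp
      obtain ⟨huq, hlq, hrq, -, -, -, -, hcoreq⟩ := hQfacts q hq
      have h1 : TGWFlow G l (p.2 + 1) p.1 (f p).1 := tgw_flow_stay_right hcorep.1 hlp (by omega)
      have h2 : TGWFlow G (p.2 + 1) (r + 1) (f p).1 q.1 := by
        rw [heq, hteq]
        exact hcoreq.2
      exact hXflow p.1 hup q.1 huq hne (tgw_flow_trans (by omega) (by omega) h1 h2)
    have hB : ∀ p ∈ Q, ∀ q ∈ Q, ∀ m ∈ Q, p.2 < q.2 → q.2 < m.2 → False := by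
      intro p hp q hq m hm h1 h2
      by_cases hpq : p.1 = q.1
      · by_cases hqm : q.1 = m.1
        · obtain ⟨hup, hlp, hrp, hP1p, -, -, -, -⟩ := hQfacts p hp
          obtain ⟨-, hlq, hrq, -, -, hP3q, -, -⟩ := hQfacts q hq
          obtain ⟨-, hlm, hrm, -, hP2m, -, -, -⟩ := hQfacts m hm
          apply hP3q
          constructor
          · rw [← hpq]
            exact tgw_flow_stay_right hP1p (by omega) (by omega)
          · rw [hqm]
            exact tgw_flow_stay_left (by omega) (by omega) hP2m
        · exact hAB q hq m hm hqm h2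
      · exact hAB p hp q hq hpq h1
    rcases Finset.eq_empty_or_nonempty Q with hQe | hQne
    · simp [hQe]
    obtain ⟨p0, hp0⟩ := hQne
    have hΔpos : 1 ≤ (Finset.Icc l r).sup fun t => ((G t).neighborSet z).ncard := by
      obtain ⟨hup, hlp, hrp, -, -, -, hadj, -⟩ := hQfacts p0 hp0
      have hne : ((G p0.2).neighborSet z).Nonempty := ⟨(f p0).1, hadj.symm⟩
      have h1 : 0 < ((G p0.2).neighborSet z).ncard :=
        (Set.ncard_pos (Set.toFinite _)).mpr hne
      calc 1 ≤ ((G p0.2).neighborSet z).ncard := h1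
        _ ≤ (Finset.Icc l r).sup fun t => ((G t).neighborSet z).ncard :=
            Finset.le_sup (f := fun t => ((G t).neighborSet z).ncard)
              (Finset.mem_Icc.mpr ⟨hlp, hrp⟩)
    by_cases hsame : ∀ p ∈ Q, ∀ q ∈ Q, p.1 = q.1
    · have h2 : Q.card ≤ 2 := by
        by_contra hgt
        push_neg at hgt
        obtain ⟨a, b, c, ha, hb, hc, hab, hac, hbc⟩ := Finset.two_lt_card_iff.mp hgt
        have e1 := hsame a ha b hb
        have e2 := hsame a ha c hc
        have e3 := hsame b hb c hc
        have t1 : a.2 ≠ b.2 := fun h => hab (Prod.ext e1 h)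
        have t2 : a.2 ≠ c.2 := fun h => hac (Prod.ext e2 h)
        have t3 : b.2 ≠ c.2 := fun h => hbc (Prod.ext e3 h)
        rcases lt_trichotomy a.2 b.2 with h | h | h
        · rcases lt_trichotomy b.2 c.2 with h' | h' | h'
          · exact hB a ha b hb c hc h h'
          · exact t3 h'
          · rcases lt_trichotomy a.2 c.2 with h'' | h'' | h''
            · exact hB a ha c hc b hb h'' h'
            · exact t2 h''
            · exact hB c hc a ha b hb h'' h
        · exact t1 h
        · rcases lt_trichotomy a.2 c.2 with h' | h' | h'
          · exact hB b hb a ha c hc h h'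
          · exact t2 h'
          · rcases lt_trichotomy b.2 c.2 with h'' | h'' | h''
            · exact hB b hb c hc a ha h'' h'
            · exact t3 h''
            · exact hB c hc b hb a ha h'' h
      omega
    · push_neg at hsame
      obtain ⟨p, hp, q, hq, hpq⟩ := hsame
      have hpfacts := hQfacts p hp
      have htime : ∀ m ∈ Q, m.2 = p.2 := by
        intro m hm
        by_cases hmp : m.1 = p.1
        · have hmq : m.1 ≠ q.1 := by rw [hmp]; exact hpq
          rw [hA m hm q hq hmq, ← hA p hp q hq hpq]
        · exact hA m hm p hp hmp
      have hmaps : ∀ m ∈ Q, (f m).1 ∈ (Set.toFinite ((G p.2).neighborSet z)).toFinset := by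
        intro m hm
        obtain ⟨-, -, -, -, -, -, hadj, -⟩ := hQfacts m hm
        rw [Set.Finite.mem_toFinset]
        rw [← htime m hm]
        exact hadj.symm
      have hinj : Set.InjOn (fun m => (f m).1) Q := by
        intro m hm m' hm' heq
        by_cases h : m.1 = m'.1
        · have h2 : m.2 = m'.2 := by rw [htime m hm, htime m' hm']
          exact Prod.ext h h2
        · exact absurd heq (hC m hm m' hm' (by rw [htime m hm, htime m' hm']) h)
      have hle := Finset.card_le_card_of_injOn (fun m => (f m).1) hmaps hinj
      rw [← Set.ncard_eq_toFinset_card ((G p.2).neighborSet z) (Set.toFinite _)] at hle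
      calc Q.card ≤ ((G p.2).neighborSet z).ncard := hle
        _ ≤ (Finset.Icc l r).sup fun t => ((G t).neighborSet z).ncard :=
            Finset.le_sup (f := fun t => ((G t).neighborSet z).ncard)
              (Finset.mem_Icc.mpr ⟨hpfacts.2.1, hpfacts.2.2.1⟩)
        _ ≤ 2 * (Finset.Icc l r).sup fun t => ((G t).neighborSet z).ncard := by omega
  have hsum : (X ×ˢ Finset.Icc l r).card
      ≤ 2 * ∑ z : V, (Finset.Icc l r).sup fun t => ((G t).neighborSet z).ncard := by
    rw [hcount]
    calc ∑ z : V, ((X ×ˢ Finset.Icc l r).filter fun p => (f p).2 = z).card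
        ≤ ∑ z : V, 2 * (Finset.Icc l r).sup fun t => ((G t).neighborSet z).ncard :=
          Finset.sum_le_sum fun z _ => hfiber z
      _ = 2 * ∑ z : V, (Finset.Icc l r).sup fun t => ((G t).neighborSet z).ncard := by
          rw [Finset.mul_sum]
  have hcardP : (X ×ˢ Finset.Icc l r).card = X.card * (Finset.Icc l r).card :=
    Finset.card_product X (Finset.Icc l r)
  have hkT : k * (Finset.Icc l r).card
      ≤ 2 * ∑ z : V, (Finset.Icc l r).sup fun t => ((G t).neighborSet z).ncard := by
    calc k * (Finset.Icc l r).card ≤ X.card * (Finset.Icc l r).card :=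
          Nat.mul_le_mul_right _ hk'
      _ = (X ×ˢ Finset.Icc l r).card := hcardP.symm
      _ ≤ _ := hsum
  have hreal : (k : ℝ) * ((Finset.Icc l r).card : ℝ)
      ≤ 2 * ((∑ z : V, (Finset.Icc l r).sup fun t => ((G t).neighborSet z).ncard : ℕ) : ℝ) := by
    exact_mod_cast hkT
  have hIk : (k:ℝ) * (2 * D * (Fintype.card V : ℝ) / (k:ℝ) + 1)
      ≤ (k:ℝ) * ((Finset.Icc l r).card : ℝ) :=
    mul_le_mul_of_nonneg_left hI (le_of_lt hk0)
  have hid : (k:ℝ) * (2 * D * (Fintype.card V : ℝ) / (k:ℝ) + 1)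
      = 2 * D * (Fintype.card V : ℝ) + k := by
    field_simp
  rw [hid] at hIk
  have hfin : ((∑ z : V, (Finset.Icc l r).sup fun t => ((G t).neighborSet z).ncard : ℕ) : ℝ)
      ≤ D * (Fintype.card V : ℝ) := hdeg
  linarith
end

section
/- Let G = (G_t)_{t ∈ I} be an always-connected temporal graph over a finite interval I = {ℓ, …, r} on a vertex set V of size n, with average temporal maximum degree at most D (D ≥ 1 real), let X ⊆ V be a set of at least two vertices, and let k ≥ 2 be an integer. If |I| ≥ 2·D·n/k + 1, then there exists a set S ⊆ X with |S| ≤ (log₂ |X|) / (−log₂(1 − 1/(2k))), and in particular |S| ≤ 2·k·log₂ |X|, such that for every u ∈ X there exists v ∈ S with a temporal walk from v to u in G. -/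
attribute [local instance] Classical.propDecidable

namespace TGaux

variable {V : Type} [Fintype V]

noncomputable def nbrF (G : ℕ → SimpleGraph V) (t : ℕ) (z : V) : Finset V :=
  Finset.univ.filter (fun y => (G t).Adj z y)

@[simp] lemma mem_nbrF {G : ℕ → SimpleGraph V} {t : ℕ} {z y : V} :
    y ∈ nbrF G t z ↔ (G t).Adj z y := by simp [nbrF]

noncomputable def blob (G : ℕ → SimpleGraph V) (l : ℕ) (x : V) : ℕ → Finset V
  | 0 => {x}
  | (j+1) => blob G l x j ∪ (blob G l x j).biUnion (fun z => nbrF G (l + j) z)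

section defs

variable (G : ℕ → SimpleGraph V) (l : ℕ) (Y : Finset V)

noncomputable def UU (j : ℕ) : Finset V := Y.biUnion (fun i => blob G l i j)

noncomputable def PP (i : V) (j : ℕ) : Finset V :=
  (blob G l i j).filter (fun z => ∀ i' ∈ Y, i' ≠ i → z ∉ blob G l i' j)

def evA (j : ℕ) (i : V) : Prop :=
  ∃ z w, z ∈ PP G l Y i j ∧ w ∉ UU G l Y j ∧ (G (l + j)).Adj z w

def evB (j : ℕ) (i : V) : Prop :=
  ∃ z w i', z ∈ PP G l Y i j ∧ i' ∈ Y ∧ i' ≠ i ∧ w ∈ blob G l i' j ∧ (G (l + j)).Adj z w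

end defs

variable {G : ℕ → SimpleGraph V} {l r : ℕ} {Y : Finset V}

lemma mem_UU {z : V} {j : ℕ} : z ∈ UU G l Y j ↔ ∃ i ∈ Y, z ∈ blob G l i j :=
  Finset.mem_biUnion

lemma PP_disjoint {i i' z : V} {j : ℕ} (hi : i ∈ Y) (hz : z ∈ PP G l Y i j)
    (hz' : z ∈ PP G l Y i' j) : i = i' := by
  by_contra hne
  exact (Finset.mem_filter.mp hz').2 i hi hne (Finset.mem_filter.mp hz).1

lemma self_mem_blob (G : ℕ → SimpleGraph V) (l : ℕ) (x : V) (j : ℕ) :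
    x ∈ blob G l x j := by
  induction j with
  | zero => simp [blob]
  | succ j ih => simp only [blob, Finset.mem_union]; exact Or.inl ih

lemma blob_mono (G : ℕ → SimpleGraph V) (l : ℕ) (x : V) {j j' : ℕ} (h : j ≤ j') :
    blob G l x j ⊆ blob G l x j' := by
  induction j' with
  | zero => simpa [Nat.le_zero.mp h]
  | succ j' ih =>
    rcases Nat.lt_or_ge j (j'+1) with h1 | h2
    · intro z hz
      simp only [blob, Finset.mem_union]
      exact Or.inl (ih (Nat.lt_succ_iff.mp h1) hz)
    · have : j = j' + 1 := le_antisymm h h2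
      subst this; exact fun z hz => hz

lemma blob_step {G : ℕ → SimpleGraph V} {l : ℕ} {x z w : V} {j : ℕ}
    (hz : z ∈ blob G l x j) (h : (G (l + j)).Adj z w) :
    w ∈ blob G l x (j + 1) := by
  simp only [blob, Finset.mem_union]
  exact Or.inr (Finset.mem_biUnion.mpr ⟨z, hz, mem_nbrF.mpr h⟩)

lemma self_reach (G : ℕ → SimpleGraph V) {l r : ℕ} (hlr : l ≤ r) (x : V) :
    TemporalReach G l r x x := by
  refine ⟨r + 1, r, fun _ => x, by omega, by omega, le_rfl, rfl, rfl, ?_⟩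
  intro t ht1 ht2; omega

lemma blob_reach (G : ℕ → SimpleGraph V) {l r : ℕ} (hlr : l ≤ r) {x u : V} {j : ℕ}
    (hj : j ≤ r + 1 - l) (hu : u ∈ blob G l x j) : TemporalReach G l r x u := by
  -- first a walk-building claim
  have key : ∀ (j : ℕ) (u : V), u ∈ blob G l x j →
      ∃ w : ℕ → V, w l = x ∧ w (l + j) = u ∧
        ∀ t, l ≤ t → t < l + j → (w t = w (t+1) ∨ (G t).Adj (w t) (w (t+1))) := by
    intro j
    induction j with
    | zero =>
      intro u hu
      simp only [blob, Finset.mem_singleton] at hu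
      subst hu
      exact ⟨fun _ => u, rfl, rfl, fun t h1 h2 => by omega⟩
    | succ j ih =>
      intro u hu
      simp only [blob, Finset.mem_union, Finset.mem_biUnion, mem_nbrF] at hu
      rcases hu with hu | ⟨z, hz, hadj⟩
      · obtain ⟨w, hw1, hw2, hw3⟩ := ih u hu
        refine ⟨fun t => if t ≤ l + j then w t else u, by simp [hw1], by simp, ?_⟩
        intro t ht1 ht2
        rcases Nat.lt_or_ge t (l + j) with h | h
        · have e1 : (if t ≤ l + j then w t else u) = w t := by simp [Nat.le_of_lt h]
          have e2 : (if t + 1 ≤ l + j then w (t+1) else u) = w (t+1) := by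
            simp [Nat.succ_le_of_lt h]
          simp only [e1, e2]
          exact hw3 t ht1 h
        · have e : t = l + j := by omega
          subst e
          have e2 : ¬ (l + j + 1 ≤ l + j) := by omega
          simp only [if_neg e2, if_pos (le_refl (l+j))]
          exact Or.inl hw2
      · obtain ⟨w, hw1, hw2, hw3⟩ := ih z hz
        refine ⟨fun t => if t ≤ l + j then w t else u, by simp [hw1], by simp, ?_⟩
        intro t ht1 ht2
        rcases Nat.lt_or_ge t (l + j) with h | h
        · have e1 : (if t ≤ l + j then w t else u) = w t := by simp [Nat.le_of_lt h]
          have e2 : (if t + 1 ≤ l + j then w (t+1) else u) = w (t+1) := by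
            simp [Nat.succ_le_of_lt h]
          simp only [e1, e2]
          exact hw3 t ht1 h
        · have e : t = l + j := by omega
          subst e
          have e2 : ¬ (l + j + 1 ≤ l + j) := by omega
          right
          simpa [hw2, e2] using hadj
  match j, hj with
  | 0, _ => 
    have : u = x := by simpa [blob] using hu
    subst this; exact self_reach G hlr u
  | (j+1), hj =>
    obtain ⟨w, hw1, hw2, hw3⟩ := key (j+1) u hu
    refine ⟨l, l + j, w, le_rfl, by omega, by omega, hw1, by simpa [Nat.add_assoc] using hw2, ?_⟩
    intro t ht1 ht2
    exact hw3 t ht1 (by omega)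


lemma exists_boundary_edge {Gt : SimpleGraph V} (hconn : Gt.Connected)
    {P : Finset V} {z₀ w₀ : V} (hz : z₀ ∈ P) (hw : w₀ ∉ P) :
    ∃ z ∈ P, ∃ w, w ∉ P ∧ Gt.Adj z w := by
  obtain ⟨p⟩ := hconn.preconnected z₀ w₀
  clear hconn
  induction p with
  | nil => exact absurd hz hw
  | @cons a c b h p ih =>
    by_cases hc : c ∈ P
    · exact ih hc hw
    · exact ⟨a, hz, c, hc, h⟩


lemma UU_mono {j j' : ℕ} (h : j ≤ j') : UU G l Y j ⊆ UU G l Y j' := by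
  intro z hz
  obtain ⟨i, hi, hzi⟩ := mem_UU.mp hz
  exact mem_UU.mpr ⟨i, hi, blob_mono G l i h hzi⟩

lemma self_mem_PP (hlr : l ≤ r)
    (hind : ∀ i ∈ Y, ∀ i' ∈ Y, i ≠ i' → ¬ TemporalReach G l r i i')
    {i : V} (hi : i ∈ Y) {j : ℕ} (hj : j ≤ r + 1 - l) : i ∈ PP G l Y i j := by
  refine Finset.mem_filter.mpr ⟨self_mem_blob G l i j, ?_⟩
  intro i' hi' hne hmem
  exact hind i' hi' i hi hne (blob_reach G hlr hj hmem)

lemma evAB (hconn : ∀ t ∈ Finset.Icc l r, (G t).Connected) (hlr : l ≤ r)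
    (hind : ∀ i ∈ Y, ∀ i' ∈ Y, i ≠ i' → ¬ TemporalReach G l r i i')
    (hY2 : 2 ≤ Y.card)
    {i : V} (hi : i ∈ Y) {j : ℕ} (hj : j < r + 1 - l) :
    evA G l Y j i ∨ evB G l Y j i := by
  obtain ⟨i', hi', hne⟩ : ∃ i' ∈ Y, i' ≠ i :=
    Finset.exists_mem_ne (by omega) i
  have hPself : i ∈ PP G l Y i j := self_mem_PP hlr hind hi (by omega)
  have hi'notP : i' ∉ PP G l Y i j := by
    intro hmem
    exact (Finset.mem_filter.mp hmem).2 i' hi' hne (self_mem_blob G l i' j)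
  have hc : (G (l + j)).Connected :=
    hconn (l + j) (Finset.mem_Icc.mpr ⟨Nat.le_add_right _ _, by omega⟩)
  obtain ⟨z, hzP, w, hwP, hadj⟩ := exists_boundary_edge hc hPself hi'notP
  by_cases hwU : w ∈ UU G l Y j
  · right
    obtain ⟨i₀, hi₀, hw0⟩ := mem_UU.mp hwU
    by_cases h0 : i₀ = i
    · subst h0
      have : ¬ (∀ i'' ∈ Y, i'' ≠ i₀ → w ∉ blob G l i'' j) := by
        intro hall
        exact hwP (Finset.mem_filter.mpr ⟨hw0, hall⟩)
      push_neg at this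
      obtain ⟨i'', hi'', hne'', hw''⟩ := this
      exact ⟨z, w, i'', hzP, hi'', hne'', hw'', hadj⟩
    · exact ⟨z, w, i₀, hzP, hi₀, h0, hw0, hadj⟩
  · left; exact ⟨z, w, hzP, hwU, hadj⟩

lemma ncard_nbr (G : ℕ → SimpleGraph V) (t : ℕ) (w : V) :
    ((G t).neighborSet w).ncard = (nbrF G t w).card := by
  have h : (G t).neighborSet w = ↑(nbrF G t w) := by
    ext y; simp [SimpleGraph.mem_neighborSet, nbrF]
  rw [h, Set.ncard_coe_finset]

lemma cross_kill {j₁ j₂ : ℕ} {i₁ i₂ i' z : V} (hlt : j₁ < j₂)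
    (hi₁ : i₁ ∈ Y) (hzP₁ : z ∈ PP G l Y i₁ j₁)
    (hi' : i' ∈ Y) (hne : i' ≠ i₁) (hzb : z ∈ blob G l i' (j₁+1))
    (hzP₂ : z ∈ PP G l Y i₂ j₂) : False := by
  have h1 : z ∈ blob G l i₁ j₂ :=
    blob_mono G l i₁ (le_of_lt hlt) (Finset.mem_filter.mp hzP₁).1
  have h2 : z ∈ blob G l i' j₂ := blob_mono G l i' hlt hzb
  by_cases h : i₁ = i₂
  · subst h
    exact (Finset.mem_filter.mp hzP₂).2 i' hi' (fun he => hne he) h2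
  · exact (Finset.mem_filter.mp hzP₂).2 i₁ hi₁ h h1

lemma indep_count (hconn : ∀ t ∈ Finset.Icc l r, (G t).Connected) (hlr : l ≤ r)
    (hY2 : 2 ≤ Y.card)
    (hind : ∀ i ∈ Y, ∀ i' ∈ Y, i ≠ i' → ¬ TemporalReach G l r i i') :
    Y.card * (r + 1 - l) ≤
      (∑ w : V, (Finset.Icc l r).sup fun t => ((G t).neighborSet w).ncard) + Fintype.card V := by
  classical
  set T := r + 1 - l with hT
  set MD : V → ℕ := fun w => (Finset.Icc l r).sup fun t => ((G t).neighborSet w).ncard with hMD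
  set A : ℕ → Finset V := fun j => Y.filter (fun i => evA G l Y j i) with hA
  set B : ℕ → Finset V := fun j => Y.filter (fun i => ¬ evA G l Y j i) with hB
  set NEW : ℕ → Finset V := fun j => UU G l Y (j+1) \ UU G l Y j with hNEW
  have hsplit : ∀ j, (A j).card + (B j).card = Y.card := fun j =>
    Finset.card_filter_add_card_filter_not _
  have hBev : ∀ j, j < T → ∀ i ∈ B j, evB G l Y j i := by
    intro j hj i hiB
    have h1 := Finset.mem_filter.mp hiB
    exact (evAB hconn hlr hind hY2 h1.1 hj).resolve_left h1.2
  -- B count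
  have hBtot : ((Finset.range T).sigma (fun j => B j)).card ≤ Fintype.card V := by
    rw [← Finset.card_univ]
    apply Finset.card_le_card_of_injOn
      (fun p => if h : evB G l Y p.1 p.2 then h.choose else p.2)
    · intro p hp; exact Finset.mem_univ _
    · intro p hp q hq hfeq
      have hp' := Finset.mem_sigma.mp hp
      have hq' := Finset.mem_sigma.mp hq
      have hBp : evB G l Y p.1 p.2 := hBev p.1 (Finset.mem_range.mp hp'.1) p.2 hp'.2
      have hBq : evB G l Y q.1 q.2 := hBev q.1 (Finset.mem_range.mp hq'.1) q.2 hq'.2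
      have hfeq' : hBp.choose = hBq.choose := by
        have e1 : (fun (p : (_ : ℕ) × V) =>
            if h : evB G l Y p.1 p.2 then h.choose else p.2) p = hBp.choose := dif_pos hBp
        have e2 : (fun (p : (_ : ℕ) × V) =>
            if h : evB G l Y p.1 p.2 then h.choose else p.2) q = hBq.choose := dif_pos hBq
        rw [← e1, ← e2]; exact hfeq
      obtain ⟨wp, ip', hzPp, hip'Y, hip'ne, hwp, hadjp⟩ := hBp.choose_spec
      obtain ⟨wq, iq', hzPq, hiq'Y, hiq'ne, hwq, hadjq⟩ := hBq.choose_spec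
      have hzpblob : hBp.choose ∈ blob G l ip' (p.1 + 1) := blob_step hwp hadjp.symm
      have hzqblob : hBq.choose ∈ blob G l iq' (q.1 + 1) := blob_step hwq hadjq.symm
      have hip2 : p.2 ∈ Y := (Finset.mem_filter.mp hp'.2).1
      have hiq2 : q.2 ∈ Y := (Finset.mem_filter.mp hq'.2).1
      rcases Nat.lt_trichotomy p.1 q.1 with hlt | heq | hgt
      · exact absurd (cross_kill hlt hip2 hzPp hip'Y hip'ne hzpblob
          (hfeq' ▸ hzPq)) (fun h => h)
      · have hsnd : p.2 = q.2 := by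
          apply PP_disjoint hip2 (j := p.1)
          · exact hzPp
          · have : hBp.choose ∈ PP G l Y q.2 q.1 := hfeq' ▸ hzPq
            rwa [← heq] at this
        exact Sigma.ext heq (heq_of_eq hsnd)
      · exact absurd (cross_kill hgt hiq2 hzPq hiq'Y hiq'ne hzqblob
          (hfeq'.symm ▸ hzPp)) (fun h => h)
  -- A count per j
  have hAj : ∀ j, j < T → (A j).card ≤ ∑ w ∈ NEW j, (nbrF G (l+j) w).card := by
    intro j hj
    have hcard : ((NEW j).sigma (fun w => nbrF G (l+j) w)).card
        = ∑ w ∈ NEW j, (nbrF G (l+j) w).card := Finset.card_sigma _ _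
    rw [← hcard]
    apply Finset.card_le_card_of_injOn
      (fun i => if h : evA G l Y j i then (⟨h.choose_spec.choose, h.choose⟩ : (_ : V) × V)
        else ⟨i, i⟩)
    · intro i hiA
      have hi' := Finset.mem_filter.mp hiA
      have hAi : evA G l Y j i := hi'.2
      obtain ⟨hzP, hwU, hadj⟩ := hAi.choose_spec.choose_spec
      have e : (if h : evA G l Y j i then (⟨h.choose_spec.choose, h.choose⟩ : (_ : V) × V)
          else ⟨i, i⟩) = ⟨hAi.choose_spec.choose, hAi.choose⟩ := dif_pos hAi
      simp only [dif_pos hAi]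
      refine Finset.mem_sigma.mpr ⟨?_, ?_⟩
      · refine Finset.mem_sdiff.mpr ⟨?_, hwU⟩
        exact mem_UU.mpr ⟨i, hi'.1, blob_step (Finset.mem_filter.mp hzP).1 hadj⟩
      · exact mem_nbrF.mpr hadj.symm
    · intro i₁ h₁ i₂ h₂ hfe
      have hA₁ : evA G l Y j i₁ := (Finset.mem_filter.mp (Finset.mem_coe.mp h₁)).2
      have hA₂ : evA G l Y j i₂ := (Finset.mem_filter.mp (Finset.mem_coe.mp h₂)).2
      simp only at hfe
      have e1 : (if h : evA G l Y j i₁ then (⟨h.choose_spec.choose, h.choose⟩ : (_ : V) × V)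
          else ⟨i₁, i₁⟩) = ⟨hA₁.choose_spec.choose, hA₁.choose⟩ := dif_pos hA₁
      have e2 : (if h : evA G l Y j i₂ then (⟨h.choose_spec.choose, h.choose⟩ : (_ : V) × V)
          else ⟨i₂, i₂⟩) = ⟨hA₂.choose_spec.choose, hA₂.choose⟩ := dif_pos hA₂
      rw [e1, e2] at hfe
      have hz : hA₁.choose = hA₂.choose := congrArg (fun p => p.2) hfe
      obtain ⟨hzP₁, _, _⟩ := hA₁.choose_spec.choose_spec
      obtain ⟨hzP₂, _, _⟩ := hA₂.choose_spec.choose_spec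
      exact PP_disjoint (Finset.mem_filter.mp (Finset.mem_coe.mp h₁)).1 hzP₁ (hz ▸ hzP₂)
  -- A total
  have hAtot : ∑ j ∈ Finset.range T, (A j).card ≤ Finset.univ.sum MD := by
    have step1 : ∑ j ∈ Finset.range T, (A j).card
        ≤ ∑ j ∈ Finset.range T, ∑ w ∈ NEW j, (nbrF G (l+j) w).card :=
      Finset.sum_le_sum (fun j hj => hAj j (Finset.mem_range.mp hj))
    have step2 : ∑ j ∈ Finset.range T, ∑ w ∈ NEW j, (nbrF G (l+j) w).card
        = ∑ p ∈ (Finset.range T).sigma (fun j => NEW j), (nbrF G (l + p.1) p.2).card :=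
      Finset.sum_sigma' _ _ _
    have step3 : ∑ p ∈ (Finset.range T).sigma (fun j => NEW j), (nbrF G (l + p.1) p.2).card
        ≤ ∑ p ∈ (Finset.range T).sigma (fun j => NEW j), MD p.2 := by
      apply Finset.sum_le_sum
      intro p hp
      have hp' := Finset.mem_sigma.mp hp
      have hmem : l + p.1 ∈ Finset.Icc l r := Finset.mem_Icc.mpr
        ⟨Nat.le_add_right _ _, by have := Finset.mem_range.mp hp'.1; omega⟩
      have hle : ((G (l + p.1)).neighborSet p.2).ncard ≤ MD p.2 := by
        simpa [hMD] using Finset.le_sup (f := fun t => ((G t).neighborSet p.2).ncard) hmem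
      rw [ncard_nbr] at hle
      exact hle
    have hinj : ∀ p ∈ (Finset.range T).sigma (fun j => NEW j),
        ∀ q ∈ (Finset.range T).sigma (fun j => NEW j),
        (fun x => x.2) p = (fun x => x.2) q → p = q := by
      intro p hp q hq he
      have hp' := Finset.mem_sigma.mp hp
      have hq' := Finset.mem_sigma.mp hq
      simp only at he
      have hfst : p.1 = q.1 := by
        by_contra hne
        have h1 := Finset.mem_sdiff.mp hp'.2
        have h2 := Finset.mem_sdiff.mp hq'.2
        rcases Nat.lt_or_ge p.1 q.1 with h | h
        · exact h2.2 (he ▸ (UU_mono h h1.1))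
        · have hlt : q.1 + 1 ≤ p.1 := by omega
          exact h1.2 (he ▸ (UU_mono hlt h2.1))
      exact Sigma.ext hfst (heq_of_eq he)
    have step4 : ∑ p ∈ (Finset.range T).sigma (fun j => NEW j), MD p.2
        = ∑ w ∈ ((Finset.range T).sigma (fun j => NEW j)).image (fun p => p.2), MD w :=
      (Finset.sum_image hinj).symm
    have step5 : ∑ w ∈ ((Finset.range T).sigma (fun j => NEW j)).image (fun p => p.2), MD w
        ≤ Finset.univ.sum MD :=
      Finset.sum_le_sum_of_subset (Finset.subset_univ _)
    omega
  -- assembly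
  have e1 : ∑ _j ∈ Finset.range T, Y.card = Y.card * T := by
    rw [Finset.sum_const, Finset.card_range, smul_eq_mul, mul_comm]
  have e2 : ∑ j ∈ Finset.range T, ((A j).card + (B j).card) = ∑ _j ∈ Finset.range T, Y.card :=
    Finset.sum_congr rfl (fun j _ => hsplit j)
  have e3 : ∑ j ∈ Finset.range T, (B j).card = ((Finset.range T).sigma (fun j => B j)).card :=
    (Finset.card_sigma _ _).symm
  have e4 : ∑ j ∈ Finset.range T, ((A j).card + (B j).card)
      = (∑ j ∈ Finset.range T, (A j).card) + ∑ j ∈ Finset.range T, (B j).card :=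
    Finset.sum_add_distrib
  show Y.card * T ≤ Finset.univ.sum MD + Fintype.card V
  calc Y.card * T = ∑ j ∈ Finset.range T, ((A j).card + (B j).card) := by rw [e2, e1]
    _ = (∑ j ∈ Finset.range T, (A j).card) + ∑ j ∈ Finset.range T, (B j).card := e4
    _ ≤ Finset.univ.sum MD + Fintype.card V := by
        rw [e3]; exact Nat.add_le_add hAtot hBtot

section CW

variable (Rel : V → V → Prop)

def IndepRel (Z : Finset V) : Prop := ∀ u ∈ Z, ∀ v ∈ Z, u ≠ v → ¬ Rel u v

noncomputable def dH (Y : Finset V) (v : V) : ℕ :=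
  (Y.filter (fun u => u ≠ v ∧ (Rel u v ∨ Rel v u))).card

lemma cw_main : ∀ (Y : Finset V) (b : ℕ),
    (∀ Z ⊆ Y, IndepRel Rel Z → Z.card ≤ b) →
    ∑ v ∈ Y, (1 : ℝ) / (1 + dH Rel Y v) ≤ b := by
  intro Y
  induction Y using Finset.strongInductionOn with
  | _ Y IH =>
    intro b hb
    rcases Finset.eq_empty_or_nonempty Y with rfl | hne
    · simp
    obtain ⟨v, hvY, hvmin⟩ := Finset.exists_min_image Y (dH Rel Y) hne
    set NNp : V → Prop := fun u => u = v ∨ (Rel u v ∨ Rel v u) with hNNp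
    set Y' : Finset V := Y.filter (fun u => ¬ NNp u) with hY'
    have hY'sub : Y' ⊆ Y := Finset.filter_subset _ _
    have hvnot : v ∉ Y' := by
      intro h
      exact (Finset.mem_filter.mp h).2 (Or.inl rfl)
    have hssub : Y' ⊂ Y := Finset.ssubset_iff_of_subset hY'sub |>.mpr ⟨v, hvY, hvnot⟩
    have hb1 : 1 ≤ b := by
      have := hb {v} (Finset.singleton_subset_iff.mpr hvY) (by
        intro u hu u' hu' hne'
        simp only [Finset.mem_singleton] at hu hu'
        subst hu; subst hu'; exact absurd rfl hne')
      simpa using this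
    have hb' : ∀ Z ⊆ Y', IndepRel Rel Z → Z.card ≤ b - 1 := by
      intro Z hZ hZind
      have hvZ : v ∉ Z := fun h => hvnot (hZ h)
      have hins : insert v Z ⊆ Y :=
        Finset.insert_subset hvY (hZ.trans hY'sub)
      have hedge : ∀ u ∈ Z, ¬ Rel u v ∧ ¬ Rel v u := by
        intro u hu
        have h2 := (Finset.mem_filter.mp (hZ hu)).2
        constructor
        · intro hR; exact h2 (Or.inr (Or.inl hR))
        · intro hR; exact h2 (Or.inr (Or.inr hR))
      have hinsind : IndepRel Rel (insert v Z) := by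
        intro u hu u' hu' hne'
        rcases Finset.mem_insert.mp hu with h1 | h1 <;>
          rcases Finset.mem_insert.mp hu' with h2 | h2
        · exact absurd (h1.trans h2.symm) hne'
        · subst h1; exact (hedge u' h2).2
        · subst h2; exact (hedge u h1).1
        · exact hZind u h1 u' h2 hne'
      have := hb _ hins hinsind
      rw [Finset.card_insert_of_notMem hvZ] at this
      omega
    have IH' := IH Y' hssub (b - 1) hb'
    -- split the sum
    have hsplit : ∑ u ∈ Y, (1:ℝ) / (1 + dH Rel Y u)
        = (∑ u ∈ Y.filter (fun u => ¬ NNp u), (1:ℝ) / (1 + dH Rel Y u))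
          + ∑ u ∈ Y.filter NNp, (1:ℝ) / (1 + dH Rel Y u) := by
      rw [add_comm, Finset.sum_filter_add_sum_filter_not]
    have hpos : ∀ (W : Finset V) (u : V), (0:ℝ) < 1 + dH Rel W u := by
      intro W u
      have : (0:ℝ) ≤ dH Rel W u := Nat.cast_nonneg _
      linarith
    have hbound1 : ∑ u ∈ Y', (1:ℝ) / (1 + dH Rel Y u)
        ≤ ∑ u ∈ Y', (1:ℝ) / (1 + dH Rel Y' u) := by
      apply Finset.sum_le_sum
      intro u hu
      apply one_div_le_one_div_of_le (hpos Y' u)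
      have hmono : dH Rel Y' u ≤ dH Rel Y u :=
        Finset.card_le_card (Finset.filter_subset_filter _ hY'sub)
      have := Nat.cast_le (α := ℝ) |>.mpr hmono
      linarith
    have hbound2 : ∑ u ∈ Y.filter NNp, (1:ℝ) / (1 + dH Rel Y u)
        ≤ (Y.filter NNp).card * (1 / (1 + dH Rel Y v)) := by
      have := Finset.sum_le_card_nsmul (Y.filter NNp)
        (fun u => (1:ℝ) / (1 + dH Rel Y u)) (1 / (1 + dH Rel Y v)) ?_
      · simpa [nsmul_eq_mul] using this
      · intro u hu
        apply one_div_le_one_div_of_le (hpos Y v)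
        have hmin := hvmin u (Finset.filter_subset _ _ hu)
        have := Nat.cast_le (α := ℝ) |>.mpr hmin
        linarith
    have hNNcard : (Y.filter NNp).card = 1 + dH Rel Y v := by
      have : Y.filter NNp = insert v (Y.filter (fun u => u ≠ v ∧ (Rel u v ∨ Rel v u))) := by
        ext u
        simp only [Finset.mem_insert, Finset.mem_filter, hNNp]
        constructor
        · rintro ⟨huY, h | h⟩
          · exact Or.inl h
          · by_cases he : u = v
            · exact Or.inl he
            · exact Or.inr ⟨huY, he, h⟩
        · rintro (rfl | ⟨huY, _, h⟩)
          · exact ⟨hvY, Or.inl rfl⟩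
          · exact ⟨huY, Or.inr h⟩
      rw [this, Finset.card_insert_of_notMem (by
        intro h
        exact (Finset.mem_filter.mp h).2.1 rfl)]
      rw [add_comm]
      rfl
    have hone : ((Y.filter NNp).card : ℝ) * (1 / (1 + dH Rel Y v)) = 1 := by
      rw [hNNcard]
      push_cast
      field_simp
    have hcast : ((b - 1 : ℕ) : ℝ) = (b : ℝ) - 1 := by
      have : (1:ℕ) ≤ b := hb1
      push_cast [this]
      ring
    calc ∑ u ∈ Y, (1:ℝ) / (1 + dH Rel Y u)
        = (∑ u ∈ Y', (1:ℝ) / (1 + dH Rel Y u))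
          + ∑ u ∈ Y.filter NNp, (1:ℝ) / (1 + dH Rel Y u) := hsplit
      _ ≤ (∑ u ∈ Y', (1:ℝ) / (1 + dH Rel Y' u)) + 1 := by
          have h2 : ∑ u ∈ Y.filter NNp, (1:ℝ) / (1 + dH Rel Y u) ≤ 1 :=
            hbound2.trans (le_of_eq hone)
          exact add_le_add hbound1 h2
      _ ≤ ((b - 1 : ℕ) : ℝ) + 1 := add_le_add_left IH' 1
      _ ≤ b := by rw [hcast]; linarith

noncomputable def outD (Y : Finset V) (v : V) : ℕ :=
  (Y.filter (fun u => u ≠ v ∧ Rel v u)).card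

noncomputable def inD (Y : Finset V) (v : V) : ℕ :=
  (Y.filter (fun u => u ≠ v ∧ Rel u v)).card

lemma sum_out_eq_sum_in (Y : Finset V) :
    ∑ v ∈ Y, outD Rel Y v = ∑ v ∈ Y, inD Rel Y v := by
  simp only [outD, inD, Finset.card_filter]
  rw [Finset.sum_comm]
  apply Finset.sum_congr rfl
  intro u _
  apply Finset.sum_congr rfl
  intro v _
  congr 1
  simp only [eq_iff_iff]
  constructor
  · rintro ⟨h1, h2⟩; exact ⟨Ne.symm h1, h2⟩
  · rintro ⟨h1, h2⟩; exact ⟨Ne.symm h1, h2⟩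

lemma dH_le (Y : Finset V) (v : V) : dH Rel Y v ≤ outD Rel Y v + inD Rel Y v := by
  have hsub : Y.filter (fun u => u ≠ v ∧ (Rel u v ∨ Rel v u))
      ⊆ (Y.filter (fun u => u ≠ v ∧ Rel v u)) ∪ (Y.filter (fun u => u ≠ v ∧ Rel u v)) := by
    intro u hu
    obtain ⟨huY, hne, h⟩ := Finset.mem_filter.mp hu
    rcases h with h | h
    · exact Finset.mem_union_right _ (Finset.mem_filter.mpr ⟨huY, hne, h⟩)
    · exact Finset.mem_union_left _ (Finset.mem_filter.mpr ⟨huY, hne, h⟩)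
  calc dH Rel Y v ≤ _ := Finset.card_le_card hsub
    _ ≤ _ := Finset.card_union_le _ _

lemma exists_big_out (Y : Finset V) (hne : Y.Nonempty) (a : ℕ) (ha : 1 ≤ a)
    (hind : ∀ Z ⊆ Y, IndepRel Rel Z → Z.card ≤ a) :
    ∃ v ∈ Y, ((Y.card : ℝ) - a) / (2 * a) ≤ (outD Rel Y v : ℝ) := by
  have hr : 1 ≤ Y.card := Finset.card_pos.mpr hne
  set r : ℕ := Y.card with hrdef
  have hrR : (1:ℝ) ≤ r := by exact_mod_cast hr
  have haR : (1:ℝ) ≤ a := by exact_mod_cast ha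
  have hcw := cw_main Rel Y a hind
  have hposd : ∀ v, (0:ℝ) < 1 + (dH Rel Y v : ℝ) := by
    intro v
    have : (0:ℝ) ≤ (dH Rel Y v : ℝ) := Nat.cast_nonneg _
    linarith
  -- Cauchy-Schwarz
  have hcs : ((r:ℝ))^2 ≤ (∑ v ∈ Y, (1 + (dH Rel Y v : ℝ)))
      * ∑ v ∈ Y, 1 / (1 + (dH Rel Y v : ℝ)) := by
    have hCS := Finset.sum_mul_sq_le_sq_mul_sq Y
      (fun v => Real.sqrt (1 + (dH Rel Y v : ℝ)))
      (fun v => 1 / Real.sqrt (1 + (dH Rel Y v : ℝ)))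
    have e1 : ∀ v ∈ Y, Real.sqrt (1 + (dH Rel Y v : ℝ))
        * (1 / Real.sqrt (1 + (dH Rel Y v : ℝ))) = 1 := by
      intro v _
      have : Real.sqrt (1 + (dH Rel Y v : ℝ)) ≠ 0 := by
        have := Real.sqrt_pos.mpr (hposd v)
        linarith
      field_simp
    have e2 : ∀ v ∈ Y, (Real.sqrt (1 + (dH Rel Y v : ℝ)))^2 = 1 + (dH Rel Y v : ℝ) := by
      intro v _
      exact Real.sq_sqrt (le_of_lt (hposd v))
    have e3 : ∀ v ∈ Y, (1 / Real.sqrt (1 + (dH Rel Y v : ℝ)))^2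
        = 1 / (1 + (dH Rel Y v : ℝ)) := by
      intro v _
      rw [div_pow, one_pow, Real.sq_sqrt (le_of_lt (hposd v))]
    rw [Finset.sum_congr rfl e1, Finset.sum_congr rfl e2, Finset.sum_congr rfl e3] at hCS
    simpa [hrdef] using hCS
  set E : ℕ := ∑ v ∈ Y, outD Rel Y v with hE
  have hsumd : (∑ v ∈ Y, (1 + (dH Rel Y v : ℝ))) ≤ (r : ℝ) + 2 * E := by
    have h1 : ∀ v ∈ Y, (dH Rel Y v : ℝ) ≤ (outD Rel Y v : ℝ) + (inD Rel Y v : ℝ) := by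
      intro v _
      exact_mod_cast dH_le Rel Y v
    have h2 : (∑ v ∈ Y, (1 + (dH Rel Y v : ℝ)))
        ≤ ∑ v ∈ Y, (1 + ((outD Rel Y v : ℝ) + (inD Rel Y v : ℝ))) :=
      Finset.sum_le_sum (fun v hv => by linarith [h1 v hv])
    have h3 : ∑ v ∈ Y, (1 + ((outD Rel Y v : ℝ) + (inD Rel Y v : ℝ)))
        = (r : ℝ) + ((∑ v ∈ Y, (outD Rel Y v : ℝ)) + ∑ v ∈ Y, (inD Rel Y v : ℝ)) := by
      rw [Finset.sum_add_distrib, Finset.sum_add_distrib, Finset.sum_const, hrdef]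
      push_cast
      ring
    have h4 : ∑ v ∈ Y, (inD Rel Y v : ℝ) = ∑ v ∈ Y, (outD Rel Y v : ℝ) := by
      have := sum_out_eq_sum_in Rel Y
      push_cast
      exact_mod_cast congrArg (Nat.cast : ℕ → ℝ) this.symm
    have h5 : ∑ v ∈ Y, (outD Rel Y v : ℝ) = (E : ℝ) := by
      rw [hE]; push_cast; ring
    rw [h3, h4, h5] at h2
    linarith
  -- combine
  have hQ : ∑ v ∈ Y, 1 / (1 + (dH Rel Y v : ℝ)) ≤ (a : ℝ) := hcw
  have hSpos : (0:ℝ) ≤ ∑ v ∈ Y, (1 + (dH Rel Y v : ℝ)) :=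
    Finset.sum_nonneg (fun v _ => le_of_lt (hposd v))
  have hr2 : ((r:ℝ))^2 ≤ ((r : ℝ) + 2 * E) * a := by
    calc ((r:ℝ))^2 ≤ (∑ v ∈ Y, (1 + (dH Rel Y v : ℝ)))
          * ∑ v ∈ Y, 1 / (1 + (dH Rel Y v : ℝ)) := hcs
      _ ≤ (∑ v ∈ Y, (1 + (dH Rel Y v : ℝ))) * a := by
          apply mul_le_mul_of_nonneg_left hQ hSpos
      _ ≤ ((r : ℝ) + 2 * E) * a := by
          apply mul_le_mul_of_nonneg_right hsumd (by linarith)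
  -- max out-degree
  obtain ⟨v, hvY, hvmax⟩ := Finset.exists_max_image Y (outD Rel Y) hne
  refine ⟨v, hvY, ?_⟩
  set M : ℝ := (outD Rel Y v : ℝ) with hM
  have hMnn : (0:ℝ) ≤ M := Nat.cast_nonneg _
  have hEM : (E : ℝ) ≤ (r : ℝ) * M := by
    have : E ≤ r * outD Rel Y v := by
      calc E = ∑ u ∈ Y, outD Rel Y u := hE
        _ ≤ Y.card * outD Rel Y v := by
            have := Finset.sum_le_card_nsmul Y (outD Rel Y) (outD Rel Y v)
              (fun u hu => hvmax u hu)
            simpa [smul_eq_mul] using this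
    rw [hM]
    exact_mod_cast this
  have hrpos : (0:ℝ) < r := by linarith
  have hkey : (r : ℝ) ≤ (1 + 2 * M) * a := by
    have h1 : (r:ℝ) * r ≤ r * ((1 + 2*M) * a) := by
      calc (r:ℝ) * r = ((r:ℝ))^2 := (sq (r:ℝ)).symm
        _ ≤ ((r : ℝ) + 2 * E) * a := hr2
        _ ≤ ((r : ℝ) + 2 * (r * M)) * a := by
            apply mul_le_mul_of_nonneg_right _ (by linarith)
            linarith
        _ = r * ((1 + 2*M) * a) := by ring
    exact le_of_mul_le_mul_left h1 hrpos
  rw [div_le_iff₀ (by linarith : (0:ℝ) < 2 * a)]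
  nlinarith [hkey]

lemma greedy_cover (hrefl : ∀ v : V, Rel v v) (k : ℕ) (hk : 2 ≤ k)
    (hind : ∀ Z : Finset V, IndepRel Rel Z → Z.card ≤ k - 1) :
    ∀ Y : Finset V, ∃ S ⊆ Y, (∀ u ∈ Y, ∃ v ∈ S, Rel v u) ∧
      (k : ℝ) ≤ (1 - 1/(2*(k:ℝ)))^(S.card) * (Y.card + k) := by
  intro Y
  induction Y using Finset.strongInductionOn with
  | _ Y IH =>
    rcases Finset.eq_empty_or_nonempty Y with rfl | hne
    · refine ⟨∅, Finset.Subset.refl _, by simp, by simp⟩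
    have ha : 1 ≤ k - 1 := by omega
    obtain ⟨v, hvY, hvout⟩ := exists_big_out Rel Y hne (k-1) ha (fun Z _ hZ => hind Z hZ)
    set C : Finset V := Y.filter (fun u => u = v ∨ Rel v u) with hC
    have hCsub : C ⊆ Y := Finset.filter_subset _ _
    have hCeq : C = insert v (Y.filter (fun u => u ≠ v ∧ Rel v u)) := by
      ext u
      simp only [hC, Finset.mem_insert, Finset.mem_filter]
      constructor
      · rintro ⟨huY, h | h⟩
        · exact Or.inl h
        · by_cases he : u = v
          · exact Or.inl he
          · exact Or.inr ⟨huY, he, h⟩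
      · rintro (rfl | ⟨huY, _, h⟩)
        · exact ⟨hvY, Or.inl rfl⟩
        · exact ⟨huY, Or.inr h⟩
    have hCcard : C.card = 1 + outD Rel Y v := by
      rw [hCeq, Finset.card_insert_of_notMem (by
        intro h
        exact (Finset.mem_filter.mp h).2.1 rfl), add_comm]
      rfl
    have hvC : v ∈ C := Finset.mem_filter.mpr ⟨hvY, Or.inl rfl⟩
    set Y' : Finset V := Y \ C with hY'
    have hY'ss : Y' ⊂ Y := by
      refine Finset.ssubset_iff_of_subset (Finset.sdiff_subset) |>.mpr ⟨v, hvY, ?_⟩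
      simp [hY', hvC]
    obtain ⟨S', hS'sub, hS'cov, hS'inv⟩ := IH Y' hY'ss
    refine ⟨insert v S', ?_, ?_, ?_⟩
    · exact Finset.insert_subset hvY (hS'sub.trans Finset.sdiff_subset)
    · intro u huY
      by_cases hu : u ∈ C
      · refine ⟨v, Finset.mem_insert_self _ _, ?_⟩
        rcases (Finset.mem_filter.mp hu).2 with he | h
        · rw [he]; exact hrefl _
        · exact h
      · obtain ⟨v', hv', hrel⟩ := hS'cov u (Finset.mem_sdiff.mpr ⟨huY, hu⟩)
        exact ⟨v', Finset.mem_insert_of_mem hv', hrel⟩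
    · set x : ℝ := 1 - 1/(2*(k:ℝ)) with hx
      have hkR : (2:ℝ) ≤ k := by exact_mod_cast hk
      have hx0 : 0 < x := by
        rw [hx]
        have h1 : 1/(2*(k:ℝ)) ≤ 1/4 := by
          apply div_le_div_of_nonneg_left (by norm_num) (by norm_num)
          linarith
        linarith
      have hx1 : x ≤ 1 := by
        rw [hx]
        have : 0 < 1/(2*(k:ℝ)) := by positivity
        linarith
      -- key shrinking inequality
      have haR : ((k - 1 : ℕ) : ℝ) = (k:ℝ) - 1 := by
        have : (1:ℕ) ≤ k := by omega
        push_cast [this]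
        ring
      have hEbig : ((Y.card : ℝ) + k) / (2*(k:ℝ)) ≤ (C.card : ℝ) := by
        have hout := hvout
        rw [haR] at hout
        have haR1 : (1:ℝ) ≤ (k:ℝ) - 1 := by linarith
        have h2a : (0:ℝ) < 2*((k:ℝ)-1) := by linarith
        have hYnn : (0:ℝ) ≤ (Y.card:ℝ) := Nat.cast_nonneg _
        have hfrac : 1 + ((Y.card : ℝ) - ((k:ℝ)-1))/(2*((k:ℝ)-1))
            = ((Y.card : ℝ) + ((k:ℝ)-1))/(2*((k:ℝ)-1)) := by
          field_simp
          ring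
        have hstep : ((Y.card : ℝ) + k) / (2*(k:ℝ))
            ≤ ((Y.card : ℝ) + ((k:ℝ)-1))/(2*((k:ℝ)-1)) := by
          rw [div_le_div_iff₀ (by linarith : (0:ℝ) < 2*(k:ℝ)) h2a]
          nlinarith
        calc ((Y.card : ℝ) + k) / (2*(k:ℝ))
            ≤ ((Y.card : ℝ) + ((k:ℝ)-1))/(2*((k:ℝ)-1)) := hstep
          _ = 1 + ((Y.card : ℝ) - ((k:ℝ)-1))/(2*((k:ℝ)-1)) := hfrac.symm
          _ ≤ 1 + (outD Rel Y v : ℝ) := by linarith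
          _ = (C.card : ℝ) := by rw [hCcard]; push_cast; ring
      have hCle : C.card ≤ Y.card := Finset.card_le_card hCsub
      have hY'card : (Y'.card : ℝ) = (Y.card : ℝ) - C.card := by
        rw [hY', Finset.card_sdiff_of_subset hCsub]
        have := hCle
        push_cast [Nat.cast_sub this]
        ring
      have hshrink : (Y'.card : ℝ) + k ≤ x * ((Y.card : ℝ) + k) := by
        rw [hY'card, hx]
        have : (0:ℝ) < 2*(k:ℝ) := by linarith
        have hq : (1 - 1/(2*(k:ℝ))) * ((Y.card : ℝ) + k)
            = ((Y.card : ℝ) + k) - ((Y.card : ℝ) + k)/(2*(k:ℝ)) := by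
          field_simp
        rw [hq]
        linarith
      have hYknn : (0:ℝ) ≤ (Y'.card : ℝ) + k := by positivity
      have hxpow : (0:ℝ) ≤ x ^ S'.card := le_of_lt (pow_pos hx0 _)
      calc (k:ℝ) ≤ x ^ S'.card * ((Y'.card : ℝ) + k) := hS'inv
        _ ≤ x ^ S'.card * (x * ((Y.card : ℝ) + k)) :=
            mul_le_mul_of_nonneg_left hshrink hxpow
        _ = x ^ (S'.card + 1) * ((Y.card : ℝ) + k) := by ring
        _ ≤ x ^ ((insert v S').card) * ((Y.card : ℝ) + k) := by
            apply mul_le_mul_of_nonneg_right _ (by positivity)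
            exact pow_le_pow_of_le_one (le_of_lt hx0) hx1 (Finset.card_insert_le _ _)

end CW

end TGaux


set_option maxHeartbeats 1000000 in
/-- In an always-connected temporal graph over the interval `I = {l,…,r}`
with average temporal maximum degree at most `D`, if `X` is a set of at least two
vertices, `k ≥ 2` is an integer, and `|I| ≥ 2·D·n/k + 1`, then there is a set `S ⊆ X`
with `|S| ≤ log₂|X| / (−log₂(1 − 1/(2k)))`, and in particular `|S| ≤ 2·k·log₂|X|`,
from which every vertex of `X` can be reached by a temporal walk. -/
theorem exists_small_temporal_dominating_set
    {V : Type} [Fintype V] (G : ℕ → SimpleGraph V) (l r : ℕ) (D : ℝ) (hD : 1 ≤ D)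
    (k : ℕ) (hk : 2 ≤ k)
    (hconn : ∀ t ∈ Finset.Icc l r, (G t).Connected)
    (hdeg : ((∑ v : V, (Finset.Icc l r).sup fun t => ((G t).neighborSet v).ncard : ℕ) : ℝ)
      ≤ D * Fintype.card V)
    (X : Finset V) (hX : 2 ≤ X.card)
    (hI : 2 * D * Fintype.card V / k + 1 ≤ ((Finset.Icc l r).card : ℝ)) :
    ∃ S ⊆ X,
      (S.card : ℝ) ≤ Real.logb 2 X.card / (-Real.logb 2 (1 - 1 / (2 * k))) ∧
      (S.card : ℝ) ≤ 2 * k * Real.logb 2 X.card ∧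
      ∀ u ∈ X, ∃ v ∈ S, TemporalReach G l r v u := by
  classical
  have hkR : (2:ℝ) ≤ (k:ℝ) := by exact_mod_cast hk
  have hkpos : (0:ℝ) < (k:ℝ) := by linarith
  have hn0 : (0:ℝ) ≤ (Fintype.card V : ℝ) := Nat.cast_nonneg _
  have hDn : (0:ℝ) ≤ 2 * D * Fintype.card V / k := by
    apply div_nonneg _ (le_of_lt hkpos)
    nlinarith
  have hT1 : (1:ℝ) ≤ ((Finset.Icc l r).card : ℝ) := by linarith
  have hTpos : 0 < (Finset.Icc l r).card := by
    have : (1:ℕ) ≤ (Finset.Icc l r).card := by exact_mod_cast hT1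
    omega
  have hlr : l ≤ r := Finset.nonempty_Icc.mp (Finset.card_pos.mp hTpos)
  -- independence bound
  have hind : ∀ Z : Finset V, TGaux.IndepRel (TemporalReach G l r) Z → Z.card ≤ k - 1 := by
    intro Z hZ
    rcases Nat.lt_or_ge Z.card 2 with h2 | h2
    · omega
    · have hcount := TGaux.indep_count (G := G) (l := l) (r := r) (Y := Z) hconn hlr h2
        (fun i hi i' hi' hne => hZ i hi i' hi' hne)
      have hTval : r + 1 - l = (Finset.Icc l r).card := (Nat.card_Icc l r).symm
      rw [hTval] at hcount
      have hcR : ((Z.card : ℝ)) * ((Finset.Icc l r).card : ℝ)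
          ≤ ((∑ w : V, (Finset.Icc l r).sup fun t => ((G t).neighborSet w).ncard : ℕ) : ℝ)
            + (Fintype.card V : ℝ) := by exact_mod_cast hcount
      have h2' : (Fintype.card V : ℝ) ≤ D * Fintype.card V := by nlinarith
      have h4 : 2 * D * Fintype.card V / k ≤ ((Finset.Icc l r).card : ℝ) - 1 := by linarith
      have h5 : 2 * D * Fintype.card V ≤ (((Finset.Icc l r).card : ℝ) - 1) * k :=
        (div_le_iff₀ hkpos).mp h4
      have hTR : (0:ℝ) < ((Finset.Icc l r).card : ℝ) := by linarith
      have hZk : (Z.card : ℝ) * ((Finset.Icc l r).card : ℝ)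
          < (k : ℝ) * ((Finset.Icc l r).card : ℝ) := by
        calc (Z.card : ℝ) * ((Finset.Icc l r).card : ℝ)
            ≤ ((∑ w : V, (Finset.Icc l r).sup fun t => ((G t).neighborSet w).ncard : ℕ) : ℝ)
              + (Fintype.card V : ℝ) := hcR
          _ ≤ D * Fintype.card V + D * Fintype.card V := by linarith [hdeg]
          _ = 2 * D * Fintype.card V := by ring
          _ ≤ (((Finset.Icc l r).card : ℝ) - 1) * k := h5
          _ < (k : ℝ) * ((Finset.Icc l r).card : ℝ) := by nlinarith
      have : (Z.card : ℝ) < (k : ℝ) := lt_of_mul_lt_mul_right hZk (le_of_lt hTR)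
      have : Z.card < k := by exact_mod_cast this
      omega
  obtain ⟨S, hSsub, hScov, hSinv⟩ := TGaux.greedy_cover (TemporalReach G l r)
    (fun v => TGaux.self_reach G hlr v) k hk hind X
  have hm2 : (2:ℝ) ≤ (X.card : ℝ) := by exact_mod_cast hX
  set x : ℝ := 1 - 1/(2*(k:ℝ)) with hxdef
  have hq0 : (0:ℝ) < 1/(2*(k:ℝ)) := by positivity
  have hq4 : 1/(2*(k:ℝ)) ≤ 1/4 := by
    apply div_le_div_of_nonneg_left (by norm_num) (by norm_num)
    linarith
  have hx0 : 0 < x := by rw [hxdef]; linarith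
  have hx1 : x < 1 := by rw [hxdef]; linarith
  have hxs : (1:ℝ)/(X.card : ℝ) ≤ x ^ S.card := by
    have h1 : (k:ℝ)/((X.card : ℝ) + k) ≤ x ^ S.card := by
      rw [div_le_iff₀ (by linarith : (0:ℝ) < (X.card : ℝ) + k)]
      exact hSinv
    have h2 : (1:ℝ)/(X.card : ℝ) ≤ (k:ℝ)/((X.card : ℝ) + k) := by
      rw [div_le_div_iff₀ (by linarith) (by linarith)]
      nlinarith
    linarith
  have hlog1 : Real.logb 2 (1/(X.card:ℝ)) ≤ Real.logb 2 (x ^ S.card) :=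
    Real.logb_le_logb_of_le one_lt_two (by positivity) hxs
  rw [Real.logb_pow, one_div, Real.logb_inv] at hlog1
  have hlx : Real.logb 2 x < 0 := Real.logb_neg one_lt_two hx0 hx1
  have hcpos : 0 < - Real.logb 2 x := by linarith
  have hmain : (S.card : ℝ) * (- Real.logb 2 x) ≤ Real.logb 2 (X.card : ℝ) := by
    nlinarith [hlog1]
  have hb1 : (S.card : ℝ) ≤ Real.logb 2 (X.card : ℝ) / (- Real.logb 2 x) :=
    (le_div_iff₀ hcpos).mpr hmain
  have hlogx : Real.log x ≤ x - 1 := Real.log_le_sub_one_of_pos hx0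
  have hcge : 1/(2*(k:ℝ)) ≤ - Real.logb 2 x := by
    have hlog2pos : (0:ℝ) < Real.log 2 := Real.log_pos one_lt_two
    have hlog2le : Real.log 2 ≤ 1 := by
      have := Real.log_two_lt_d9
      linarith
    have h1 : 1/(2*(k:ℝ)) ≤ - Real.log x := by
      have he : x - 1 = -(1/(2*(k:ℝ))) := by rw [hxdef]; ring
      rw [he] at hlogx
      linarith
    have h2 : - Real.logb 2 x = (- Real.log x) / Real.log 2 := by
      rw [Real.logb, neg_div]
    rw [h2]
    calc 1/(2*(k:ℝ)) ≤ - Real.log x := h1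
      _ ≤ (- Real.log x) / Real.log 2 := by
        rw [le_div_iff₀ hlog2pos]
        nlinarith
  have hlogm0 : 0 ≤ Real.logb 2 (X.card : ℝ) :=
    Real.logb_nonneg one_lt_two (by linarith)
  have hb2 : Real.logb 2 (X.card : ℝ) / (- Real.logb 2 x) ≤ 2 * k * Real.logb 2 (X.card : ℝ) := by
    have h1 : Real.logb 2 (X.card : ℝ) / (- Real.logb 2 x)
        ≤ Real.logb 2 (X.card : ℝ) / (1/(2*(k:ℝ))) :=
      div_le_div_of_nonneg_left hlogm0 hq0 hcge
    have h2 : Real.logb 2 (X.card : ℝ) / (1/(2*(k:ℝ))) = 2 * k * Real.logb 2 (X.card : ℝ) := by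
      field_simp
    linarith
  exact ⟨S, hSsub, hb1, hb1.trans hb2, hScov⟩
end

section
/- Let H be a connected graph on n vertices and let X be a set of k ≥ 2 vertices of H. Then there exist two distinct vertices u, v ∈ X joined in H by a path of length at most 2n/k (i.e., the graph distance between u and v in H is at most 2n/k). -/
open SimpleGraph Finset

lemma dist_getVert_le {V : Type} {G : SimpleGraph V} (hG : G.Connected)
    {u v : V} (p : G.Walk u v) : ∀ i, i ≤ p.length → G.dist u (p.getVert i) ≤ i := by
  intro i
  induction i with
  | zero => intro _; simp [p.getVert_zero]
  | succ i ih =>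
    intro h
    have hi : i < p.length := by omega
    have hadj : G.Adj (p.getVert i) (p.getVert (i+1)) := p.adj_getVert_succ hi
    calc G.dist u (p.getVert (i+1)) ≤ G.dist u (p.getVert i) + G.dist (p.getVert i) (p.getVert (i+1)) :=
          hG.dist_triangle
      _ ≤ i + 1 := by
          have := ih (le_of_lt hi)
          have h1 : G.dist (p.getVert i) (p.getVert (i+1)) = 1 := dist_eq_one_iff_adj.mpr hadj
          omega

lemma dist_getVert_right_le {V : Type} {G : SimpleGraph V} (hG : G.Connected)
    {u v : V} (p : G.Walk u v) (i : ℕ) (hi : i ≤ p.length) :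
    G.dist (p.getVert i) v ≤ p.length - i := by
  have h := dist_getVert_le hG p.reverse (p.length - i) (by rw [SimpleGraph.Walk.length_reverse]; omega)
  rw [p.getVert_reverse] at h
  have : p.length - (p.length - i) = i := by omega
  rw [this] at h
  rwa [SimpleGraph.dist_comm]

/-- In a connected graph `H` on `n` vertices, any set `X` of `k ≥ 2`
vertices contains two distinct vertices at graph distance at most `2n/k`. -/
theorem exists_close_pair_in_connected_graph
    {V : Type} [Fintype V] (H : SimpleGraph V) (hH : H.Connected)
    (X : Finset V) (hX : 2 ≤ X.card) :
    ∃ u ∈ X, ∃ v ∈ X, u ≠ v ∧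
      (H.dist u v : ℝ) ≤ 2 * (Fintype.card V : ℝ) / (X.card : ℝ) := by
  classical
  by_contra hcon
  push_neg at hcon
  set n := Fintype.card V with hn
  set k := X.card with hk
  have hk0 : 0 < k := by omega
  have key : ∀ u ∈ X, ∀ v ∈ X, u ≠ v → 2 * n < k * H.dist u v := by
    intro u hu v hv huv
    have h := hcon u hu v hv huv
    have hkR : (0:ℝ) < (k:ℝ) := by exact_mod_cast hk0
    rw [div_lt_iff₀ hkR] at h
    have : (2 * n : ℝ) < (k : ℝ) * (H.dist u v : ℝ) := by linarith
    exact_mod_cast this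
  set r := n / k with hr
  have hkr : k * r ≤ n := by rw [hr]; exact Nat.mul_div_le n k
  have hdist : ∀ u ∈ X, ∀ v ∈ X, u ≠ v → 2 * r + 1 ≤ H.dist u v := by
    intro u hu v hv huv
    have h := key u hu v hv huv
    have h2 : k * (2 * r) < k * H.dist u v := by
      calc k * (2 * r) = 2 * (k * r) := by ring
        _ ≤ 2 * n := by omega
        _ < k * H.dist u v := h
    have := Nat.lt_of_mul_lt_mul_left h2
    omega
  let B : V → Finset V := fun x => Finset.univ.filter (fun y => H.dist x y ≤ r)
  have hcard : ∀ x ∈ X, r + 1 ≤ (B x).card := by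
    intro x hx
    obtain ⟨v, hv, hvx⟩ := Finset.exists_mem_ne (show 1 < X.card by omega) x
    have hd : 2 * r + 1 ≤ H.dist x v := hdist x hx v hv (fun h => hvx h.symm)
    obtain ⟨p, hp⟩ := hH.exists_walk_length_eq_dist x v
    have hrlen : r ≤ p.length := by omega
    have hmaps : ∀ i ∈ Finset.range (r + 1), p.getVert i ∈ B x := by
      intro i hi
      simp only [Finset.mem_range] at hi
      simp only [B, Finset.mem_filter, Finset.mem_univ, true_and]
      have := dist_getVert_le hH p i (by omega)
      omega
    have hinj : ∀ i ∈ Finset.range (r + 1), ∀ j ∈ Finset.range (r + 1),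
        p.getVert i = p.getVert j → i = j := by
      have claim : ∀ i j, i < j → j ≤ r → p.getVert i ≠ p.getVert j := by
        intro i j hij hjr heq
        have h1 : H.dist x (p.getVert i) ≤ i := dist_getVert_le hH p i (by omega)
        have h2 : H.dist (p.getVert j) v ≤ p.length - j :=
          dist_getVert_right_le hH p j (by omega)
        have h3 : H.dist x v ≤ H.dist x (p.getVert i) + H.dist (p.getVert i) v :=
          hH.dist_triangle
        rw [← heq] at h2
        have hlen : j ≤ p.length := by omega
        omega
      intro i hi j hj heq
      simp only [Finset.mem_range] at hi hj
      rcases lt_trichotomy i j with h | h | h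
      · exact absurd heq (claim i j h (by omega))
      · exact h
      · exact absurd heq.symm (claim j i h (by omega))
    have := Finset.card_le_card_of_injOn (fun i => p.getVert i) hmaps hinj
    simpa using this
  have hdisj : ∀ x ∈ X, ∀ y ∈ X, x ≠ y → Disjoint (B x) (B y) := by
    intro x hx y hy hxy
    rw [Finset.disjoint_left]
    intro a ha ha'
    simp only [B, Finset.mem_filter, Finset.mem_univ, true_and] at ha ha'
    have ht : H.dist x y ≤ H.dist x a + H.dist a y := hH.dist_triangle
    have hc : H.dist a y = H.dist y a := SimpleGraph.dist_comm
    have := hdist x hx y hy hxy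
    omega
  have hsum : k * (r + 1) ≤ n := by
    calc k * (r + 1) = ∑ _x ∈ X, (r + 1) := by
          rw [Finset.sum_const, smul_eq_mul]
      _ ≤ ∑ x ∈ X, (B x).card := Finset.sum_le_sum hcard
      _ = (X.biUnion B).card := (Finset.card_biUnion hdisj).symm
      _ ≤ n := Finset.card_le_univ _
  have hmod : k * (n / k) + n % k = n := Nat.div_add_mod n k
  have hmodlt : n % k < k := Nat.mod_lt n hk0
  have hexp : k * (r + 1) = k * (n / k) + k := by rw [hr]; ring
  omega
end

section
/- There exists an absolute constant C > 0 such that the following holds. Let D ≥ 1 be a real number, let n ≥ 2 be an integer, and let (x_i)_{i ≥ 0} be a nonincreasing sequence of nonnegative integers with x_0 ≤ n satisfying: x_{i+1} = 0 whenever x_i ≤ 2, and x_{i+1} ≤ x_i − (1/8)·sqrt(x_i / (D · log₂ x_i)) whenever x_i ≥ 3. Then there exists an index i₀ ≤ C · sqrt(D · n · log₂ n) with x_{i₀} = 0. -/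
/-- There is an absolute constant `C > 0` such that for every real
`D ≥ 1`, every integer `n ≥ 2`, and every nonincreasing sequence `(x_i)` of nonnegative
integers with `x_0 ≤ n`, `x_{i+1} = 0` whenever `x_i ≤ 2`, and
`x_{i+1} ≤ x_i − (1/8)·√(x_i / (D·log₂ x_i))` whenever `x_i ≥ 3`, there is an index
`i₀ ≤ C·√(D·n·log₂ n)` with `x_{i₀} = 0`. -/
theorem decreasing_sequence_hits_zero :
    ∃ C : ℝ, 0 < C ∧
      ∀ (D : ℝ), 1 ≤ D → ∀ (n : ℕ), 2 ≤ n → ∀ x : ℕ → ℕ,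
        Antitone x → x 0 ≤ n →
        (∀ i : ℕ, x i ≤ 2 → x (i + 1) = 0) →
        (∀ i : ℕ, 3 ≤ x i →
          (x (i + 1) : ℝ) ≤ (x i : ℝ) -
            (1 / 8) * Real.sqrt ((x i : ℝ) / (D * Real.logb 2 (x i)))) →
        ∃ i₀ : ℕ, (i₀ : ℝ) ≤ C * Real.sqrt (D * n * Real.logb 2 n) ∧ x i₀ = 0 := by
  refine ⟨18, by norm_num, ?_⟩
  intro D hD n hn x hmono hx0 hzero hstep
  set L := Real.logb 2 n with hLdef
  have hn2 : (2:ℝ) ≤ (n:ℝ) := by exact_mod_cast hn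
  have hL1 : 1 ≤ L := by
    have : Real.logb 2 2 ≤ Real.logb 2 n :=
      Real.logb_le_logb_of_le (by norm_num) (by norm_num) hn2
    simpa using this
  have hDL1 : 1 ≤ D * L := by nlinarith
  have hDLpos : 0 < D * L := by linarith
  set φ : ℕ → ℝ := fun i => Real.sqrt ((x i : ℝ) * (D * L)) with hφ
  have key : ∀ i, 3 ≤ x i → φ (i+1) ≤ φ i - 1/16 := by
    intro i hxi
    have hx3 : (3:ℝ) ≤ (x i : ℝ) := by exact_mod_cast hxi
    have hxn : (x i : ℝ) ≤ (n:ℝ) := by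
      exact_mod_cast le_trans (hmono (Nat.zero_le i)) hx0
    have hlogpos : 0 < Real.logb 2 (x i) :=
      Real.logb_pos (by norm_num) (by linarith)
    have hlogle : Real.logb 2 (x i) ≤ L :=
      Real.logb_le_logb_of_le (by norm_num) (by linarith) hxn
    have h1 : (x i : ℝ) / (D * L) ≤ (x i : ℝ) / (D * Real.logb 2 (x i)) := by
      apply div_le_div_of_nonneg_left (by linarith) (by nlinarith)
      nlinarith
    have hsq1 : Real.sqrt ((x i : ℝ) / (D * L)) ≤
        Real.sqrt ((x i : ℝ) / (D * Real.logb 2 (x i))) := Real.sqrt_le_sqrt h1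
    have hstep' : (x (i+1):ℝ) ≤ (x i:ℝ) - (1/8) * Real.sqrt ((x i:ℝ)/(D*L)) := by
      have := hstep i hxi
      linarith
    set a : ℝ := (x i : ℝ) * (D * L) with ha
    set b : ℝ := (x (i+1) : ℝ) * (D * L) with hb
    have ha3 : 3 ≤ a := by nlinarith
    have h2 : Real.sqrt ((x i:ℝ)/(D*L)) * (D*L) = Real.sqrt a := by
      rw [show a = (x i:ℝ)/(D*L) * (D*L)^2 by field_simp; ring]
      rw [Real.sqrt_mul (by positivity), Real.sqrt_sq hDLpos.le]
    have hble : b ≤ a - (1/8) * Real.sqrt a := by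
      have := mul_le_mul_of_nonneg_right hstep' hDLpos.le
      rw [hb]
      nlinarith [this, h2]
    have hsa : 1 ≤ Real.sqrt a := by
      have : Real.sqrt 1 ≤ Real.sqrt a := Real.sqrt_le_sqrt (by linarith)
      simpa using this
    have hsq2 : b ≤ (Real.sqrt a - 1/16)^2 := by
      have h3 : Real.sqrt a ^ 2 = a := Real.sq_sqrt (by linarith)
      nlinarith
    calc φ (i+1) = Real.sqrt b := rfl
      _ ≤ Real.sqrt ((Real.sqrt a - 1/16)^2) := Real.sqrt_le_sqrt hsq2
      _ = Real.sqrt a - 1/16 := Real.sqrt_sq (by linarith)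
      _ = φ i - 1/16 := rfl
  set S : ℝ := Real.sqrt ((n:ℝ) * (D * L)) with hS
  have hS1 : 1 ≤ S := by
    have : Real.sqrt 1 ≤ S := Real.sqrt_le_sqrt (by nlinarith)
    simpa using this
  set M : ℕ := ⌈16 * S⌉₊ with hM
  have hMS : (M:ℝ) ≤ 16 * S + 1 := by
    have := Nat.ceil_lt_add_one (by positivity : (0:ℝ) ≤ 16 * S)
    linarith
  have hex : ∃ i ≤ M, x i ≤ 2 := by
    by_contra hcon
    push_neg at hcon
    have hall : ∀ i ≤ M, 3 ≤ x i := fun i hi => hcon i hi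
    have hdesc : ∀ k ≤ M, φ k ≤ φ 0 - k / 16 := by
      intro k hk
      induction k with
      | zero => simp
      | succ m ih =>
        have hm : m ≤ M := Nat.le_of_succ_le hk
        have := key m (hall m hm)
        have := ih hm
        push_cast
        linarith
    have hφ0 : φ 0 ≤ S := by
      apply Real.sqrt_le_sqrt
      have : (x 0 : ℝ) ≤ (n:ℝ) := by exact_mod_cast hx0
      nlinarith
    have hMge : 16 * S ≤ (M:ℝ) := Nat.le_ceil _
    have hφM : φ M ≤ 0 := by
      have := hdesc M le_rfl
      linarith
    have hxM3 : (3:ℝ) ≤ (x M : ℝ) := by exact_mod_cast hall M le_rfl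
    have : 1 ≤ φ M := by
      have : Real.sqrt 1 ≤ φ M := Real.sqrt_le_sqrt (by nlinarith)
      simpa using this
    linarith
  obtain ⟨i, hiM, hxi2⟩ := hex
  refine ⟨i + 1, ?_, hzero i hxi2⟩
  have hiR : (i:ℝ) ≤ (M:ℝ) := by exact_mod_cast hiM
  have heq : Real.sqrt (D * (n:ℝ) * L) = S := by
    rw [hS]; congr 1; ring
  rw [heq]
  push_cast
  linarith
end
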